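/- arXiv:1208.2164 — 7 statements merged into one kernel-verified Lean document; each statement's English description precedes it below -/
import Mathlib

section
/- Let D be a balanced bipartite digraph with colour classes of cardinality a ≥ 2 satisfying condition (M). Then for every set S of vertices contained in one of the colour classes with |S| ≤ (a+1)/2, the out-neighbourhood N⁺(S) satisfies |N⁺(S)| ≥ |S|. -/
namespace BipDigraph

variable {V : Type}

/-- Out-degree of `v` in the digraph `(V, A)`. -/
noncomputable def outdeg (A : V → V → Prop) (v : V) : ℕ := Nat.card {w : V // A v w}

/-- In-degree of `v` in the digraph `(V, A)`. -/
noncomputable def indeg (A : V → V → Prop) (v : V) : ℕ := Nat.card {w : V // A w v}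

/-- Degree of `v`: out-degree plus in-degree. -/
noncomputable def deg (A : V → V → Prop) (v : V) : ℕ := outdeg A v + indeg A v

/-- Out-degree of `v` relative to the vertex set `S`. -/
noncomputable def outdegIn (A : V → V → Prop) (S : Set V) (v : V) : ℕ := Nat.card {w : V // w ∈ S ∧ A v w}

/-- In-degree of `v` relative to the vertex set `S`. -/
noncomputable def indegIn (A : V → V → Prop) (S : Set V) (v : V) : ℕ := Nat.card {w : V // w ∈ S ∧ A w v}

/-- Degree of `v` relative to the vertex set `S`. -/
noncomputable def degIn (A : V → V → Prop) (S : Set V) (v : V) : ℕ := outdegIn A S v + indegIn A S v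

/-- The arc `(u,v)` belongs to the matching given by the function `M` on the class `X`. -/
def InM (X : Finset V) (M : V → V) (u v : V) : Prop := u ∈ X ∧ M u = v

/-- The arc `(u,v)` is an arc of the digraph not belonging to the matching. -/
def NotM (A : V → V → Prop) (X : Finset V) (M : V → V) (u v : V) : Prop :=
  A u v ∧ ¬ InM X M u v

/-- `M` is a complete matching from `X` to `Y`: every `x ∈ X` is matched along an arc
to a vertex of `Y`, and the matching arcs are independent. -/
def CompleteMatching (A : V → V → Prop) (X Y : Finset V) (M : V → V) : Prop :=
  (∀ x ∈ X, M x ∈ Y ∧ A x (M x)) ∧ Set.InjOn M X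

/-- Consecutive arcs of the list alternately satisfy `P` and `Q`, starting with `P`. -/
def Alt (P Q : V → V → Prop) : List V → Prop
  | [] => True
  | [_] => True
  | a :: b :: t => P a b ∧ Alt Q P (b :: t)

/-- `p` is an oriented path in `(V, A)` whose arcs are alternately in the matching `M`
(on `X`) and outside of it. -/
def IsCompatPath (A : V → V → Prop) (X : Finset V) (M : V → V) (p : List V) : Prop :=
  p ≠ [] ∧ p.Nodup ∧ p.Chain' A ∧
    (Alt (InM X M) (NotM A X M) p ∨ Alt (NotM A X M) (InM X M) p)

/-- An `M`-compatible oriented path from `u` to `v`. -/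
def IsCompatPathFromTo (A : V → V → Prop) (X : Finset V) (M : V → V)
    (p : List V) (u v : V) : Prop :=
  IsCompatPath A X M p ∧ p.head? = some u ∧ p.getLast? = some v

/-- `p` lists the vertices of an oriented cycle of `(V, A)` in cyclic order;
its length (number of arcs = number of vertices) is `p.length`. -/
def IsCycle (A : V → V → Prop) (p : List V) : Prop :=
  2 ≤ p.length ∧ p.Nodup ∧ ∃ u, p.head? = some u ∧ List.Chain' A (p ++ [u])

/-- `p` is an oriented cycle whose arcs are alternately in the matching `M` (on `X`)
and outside of it. -/
def IsCompatCycle (A : V → V → Prop) (X : Finset V) (M : V → V) (p : List V) : Prop :=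
  2 ≤ p.length ∧ p.Nodup ∧ ∃ u, p.head? = some u ∧ List.Chain' A (p ++ [u]) ∧
    (Alt (InM X M) (NotM A X M) (p ++ [u]) ∨ Alt (NotM A X M) (InM X M) (p ++ [u]))

/-- The digraph `(V, A)` contains an oriented cycle of length `n`. -/
def HasCycleOfLength (A : V → V → Prop) (n : ℕ) : Prop :=
  ∃ p : List V, IsCycle A p ∧ p.length = n

/-- `(V, A)` is a balanced bipartite digraph with colour classes `X`, `Y` of cardinality `a`. -/
def BalancedBipartite (A : V → V → Prop) (X Y : Finset V) (a : ℕ) : Prop :=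
  X.card = a ∧ Y.card = a ∧ Disjoint X Y ∧ (∀ v : V, v ∈ X ∨ v ∈ Y) ∧
    ∀ u v : V, A u v → (u ∈ X ∧ v ∈ Y) ∨ (u ∈ Y ∧ v ∈ X)

/-- Condition (M): `d(u) + d(v) ≥ 3a + 1` for every pair of distinct vertices `u, v`
with no arc between them in either direction. -/
def CondM (A : V → V → Prop) (a : ℕ) : Prop :=
  ∀ u v : V, u ≠ v → ¬ A u v → ¬ A v u → 3 * a + 1 ≤ deg A u + deg A v

/-- Condition (A): `d(x') + d(y') + d(x'') + d(y'') ≥ 6a + 2` for all pairwise distinct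
`x', x'' ∈ X`, `y', y'' ∈ Y` joined by `M`-compatible paths from `x'` to `y'` and from
`x''` to `y''`. -/
def CondA (A : V → V → Prop) (X Y : Finset V) (M : V → V) (a : ℕ) : Prop :=
  ∀ x' x'' y' y'' : V, x' ∈ X → x'' ∈ X → y' ∈ Y → y'' ∈ Y → x' ≠ x'' → y' ≠ y'' →
    (∃ p, IsCompatPathFromTo A X M p x' y') → (∃ p, IsCompatPathFromTo A X M p x'' y'') →
    6 * a + 2 ≤ deg A x' + deg A y' + deg A x'' + deg A y''

/-- An `M`-compatible cycle all of whose vertices lie in `S`. -/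
def IsCompatCycleIn (A : V → V → Prop) (X : Finset V) (M : V → V) (S : Set V)
    (p : List V) : Prop :=
  IsCompatCycle A X M p ∧ ∀ v ∈ p, v ∈ S

/-- An `M`-compatible path from `u` to `v` all of whose vertices lie in `S`. -/
def IsCompatPathFromToIn (A : V → V → Prop) (X : Finset V) (M : V → V) (S : Set V)
    (p : List V) (u v : V) : Prop :=
  IsCompatPathFromTo A X M p u v ∧ ∀ w ∈ p, w ∈ S

/-- The digraph `(V, A)` is strongly connected. -/
def StronglyConnected (A : V → V → Prop) : Prop :=
  ∀ u v : V, u ≠ v →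
    ∃ p : List V, p.Chain' A ∧ p.head? = some u ∧ p.getLast? = some v

lemma card_le_of_imp {V : Type} [Fintype V] {P Q : V → Prop}
    (h : ∀ v, P v → Q v) : Nat.card {v : V // P v} ≤ Nat.card {v : V // Q v} :=
  Nat.card_mono (Set.toFinite _) h

lemma key {V : Type} [Fintype V] [DecidableEq V] (A : V → V → Prop)
    (X Y : Finset V) (a : ℕ) (ha : 2 ≤ a)
    (hbb : BalancedBipartite A X Y a) (hM : CondM A a)
    (S : Finset V) (hS : S ⊆ X) (hc : 2 * S.card ≤ a + 1) :
    S.card ≤ Nat.card {u : V // ∃ v ∈ S, A v u} := by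
  obtain ⟨hX, hY, hdisj, _, harc⟩ := hbb
  by_contra hlt
  push_neg at hlt
  set n := Nat.card {u : V // ∃ v ∈ S, A v u} with hn
  -- out-degree of a member of S is at most n
  have hout : ∀ v ∈ S, outdeg A v ≤ n := by
    intro v hv
    exact card_le_of_imp (fun w hw => ⟨v, hv, hw⟩)
  -- in-degree of a vertex of X is at most a
  have hinY : ∀ v ∈ X, indeg A v ≤ a := by
    intro v hv
    have : Nat.card {w : V // A w v} ≤ Nat.card {w : V // w ∈ Y} := by
      refine card_le_of_imp (fun w hw => ?_)
      rcases harc w v hw with ⟨_, hvY⟩ | ⟨hwY, _⟩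
      · exact absurd hvY (Finset.disjoint_left.mp hdisj hv)
      · exact hwY
    simpa [indeg, Nat.card_eq_finsetCard, hY] using this
  have houtY : ∀ v ∈ X, outdeg A v ≤ a := by
    intro v hv
    have : Nat.card {w : V // A v w} ≤ Nat.card {w : V // w ∈ Y} := by
      refine card_le_of_imp (fun w hw => ?_)
      rcases harc v w hw with ⟨_, hwY⟩ | ⟨hvY, _⟩
      · exact hwY
      · exact absurd hvY (Finset.disjoint_left.mp hdisj hv)
    simpa [outdeg, Nat.card_eq_finsetCard, hY] using this
  -- no arc between two vertices of X
  have hnoarc : ∀ u ∈ X, ∀ v ∈ X, ¬ A u v := by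
    intro u hu v hv h
    rcases harc u v h with ⟨_, hvY⟩ | ⟨huY, _⟩
    · exact Finset.disjoint_left.mp hdisj hv hvY
    · exact Finset.disjoint_left.mp hdisj hu huY
  -- S is nonempty since n < S.card
  have hS1 : 1 ≤ S.card := by omega
  rcases eq_or_lt_of_le hS1 with h1 | h2
  · -- S.card = 1, so n = 0
    obtain ⟨v, hv⟩ := Finset.card_pos.mp (by omega : 0 < S.card)
    have hvX := hS hv
    have hn0 : n = 0 := by omega
    obtain ⟨u, huX, huv⟩ := Finset.exists_mem_ne (by omega : 1 < X.card) v
    have := hM u v huv (hnoarc u huX v hvX) (hnoarc v hvX u huX)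
    have hdv : deg A v ≤ a := by
      have h1 := hout v hv
      have h2 := hinY v hvX
      simp only [deg]; omega
    have hdu : deg A u ≤ 2 * a := by
      have h1 := houtY u huX
      have h2 := hinY u huX
      simp only [deg]; omega
    omega
  · -- S.card ≥ 2 : pick two distinct vertices of S
    obtain ⟨u, hu, v, hv, huv⟩ := Finset.one_lt_card.mp h2
    have := hM u v huv (hnoarc u (hS hu) v (hS hv)) (hnoarc v (hS hv) u (hS hu))
    have hdu : deg A u ≤ n + a := by
      have h1 := hout u hu
      have h2 := hinY u (hS hu)
      simp only [deg]; omega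
    have hdv : deg A v ≤ n + a := by
      have h1 := hout v hv
      have h2 := hinY v (hS hv)
      simp only [deg]; omega
    omega

lemma bb_symm {V : Type} {A : V → V → Prop} {X Y : Finset V} {a : ℕ}
    (h : BalancedBipartite A X Y a) : BalancedBipartite A Y X a := by
  obtain ⟨hX, hY, hdisj, hall, harc⟩ := h
  exact ⟨hY, hX, hdisj.symm, fun v => (hall v).symm, fun u v h => (harc u v h).symm⟩

/-- under condition (M), every set `S` contained in one colour class with
`|S| ≤ (a+1)/2` satisfies `|N⁺(S)| ≥ |S|`. -/
theorem stmt1 {V : Type} [Fintype V] [DecidableEq V] (A : V → V → Prop)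
    (X Y : Finset V) (a : ℕ) (ha : 2 ≤ a)
    (hbb : BalancedBipartite A X Y a) (hM : CondM A a) :
    ∀ S : Finset V, (S ⊆ X ∨ S ⊆ Y) → 2 * S.card ≤ a + 1 →
      S.card ≤ Nat.card {u : V // ∃ v ∈ S, A v u} := by
  intro S hS hc
  rcases hS with h | h
  · exact key A X Y a ha hbb hM S h hc
  · exact key A Y X a ha (bb_symm hbb) hM S h hc

end BipDigraph
end

section
/- Let D be a balanced bipartite digraph with colour classes X and Y of cardinality a ≥ 2 satisfying condition (M). Then D contains a complete matching from X to Y or a complete matching from Y to X. -/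
namespace BipDigraph

variable {V : Type}

lemma natcard_le_finset {V : Type} [Fintype V] {P : V → Prop} {T : Finset V}
    (h : ∀ w, P w → w ∈ T) : Nat.card {w : V // P w} ≤ T.card := by
  have h1 : Nat.card {w : V // P w} = Set.ncard {w : V | P w} :=
    Nat.card_coe_set_eq {w : V | P w}
  rw [h1]
  calc Set.ncard {w : V | P w} ≤ Set.ncard (T : Set V) :=
        Set.ncard_le_ncard (fun w hw => h w hw) (T : Set V).toFinite
    _ = T.card := Set.ncard_coe_finset T

lemma deg_le {V : Type} [Fintype V] {A : V → V → Prop} {v : V} {C D : Finset V}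
    (ho : ∀ w, A v w → w ∈ C) (hi : ∀ w, A w v → w ∈ D) :
    deg A v ≤ C.card + D.card :=
  add_le_add (natcard_le_finset ho) (natcard_le_finset hi)

/-- Main counting argument: two Hall violators `S ⊆ X`, `T ⊆ Y` with `S ⊆ NT` lead to a
contradiction with condition (M). -/
lemma key_s2 {V : Type} [Fintype V] [DecidableEq V] {A : V → V → Prop}
    {X Y S T NS NT : Finset V} {a : ℕ}
    (ha : 2 ≤ a) (hX : X.card = a) (hY : Y.card = a)
    (hdisj : Disjoint X Y)
    (hXY : ∀ u v, A u v → (u ∈ X ∧ v ∈ Y) ∨ (u ∈ Y ∧ v ∈ X))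
    (hM : ∀ u v : V, u ≠ v → ¬ A u v → ¬ A v u → 3 * a + 1 ≤ deg A u + deg A v)
    (hS : S ⊆ X) (hT : T ⊆ Y) (hNT : NT ⊆ X)
    (hNSc : NS.card < S.card) (hNTc : NT.card < T.card)
    (hNSm : ∀ x ∈ S, ∀ y, A x y → y ∈ NS)
    (hNTm : ∀ y ∈ T, ∀ x, A y x → x ∈ NT)
    (hsub : S ⊆ NT) : False := by
  have hdl := Finset.disjoint_left.mp hdisj
  have hinY : ∀ v ∈ Y, ∀ w, A w v → w ∈ X := by
    intro v hv w h
    rcases hXY w v h with ⟨h1, _⟩ | ⟨_, h2⟩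
    · exact h1
    · exact absurd hv (hdl h2)
  have hinX : ∀ v ∈ X, ∀ w, A w v → w ∈ Y := by
    intro v hv w h
    rcases hXY w v h with ⟨_, h2⟩ | ⟨h1, _⟩
    · exact absurd hv (fun hvv => hdl hvv h2)
    · exact h1
  have houtX : ∀ v ∈ X, ∀ w, A v w → w ∈ Y := by
    intro v hv w h
    rcases hXY v w h with ⟨_, h2⟩ | ⟨h1, _⟩
    · exact h2
    · exact absurd h1 (fun h1 => hdl hv h1)
  have nonadjY : ∀ u v, u ∈ Y → v ∈ Y → ¬ A u v := by
    intro u v hu hv h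
    rcases hXY u v h with ⟨h1, _⟩ | ⟨_, h2⟩
    · exact hdl h1 hu
    · exact hdl h2 hv
  have nonadjX : ∀ u v, u ∈ X → v ∈ X → ¬ A u v := by
    intro u v hu hv h
    rcases hXY u v h with ⟨_, h2⟩ | ⟨h1, _⟩
    · exact hdl hv h2
    · exact hdl hu h1
  have hScard : S.card ≤ NT.card := Finset.card_le_card hsub
  have hTle : T.card ≤ a := hY ▸ Finset.card_le_card hT
  -- two vertices of `T \ NS`
  have hTNS : T.card - NS.card ≤ (T \ NS).card := Finset.le_card_sdiff NS T
  have h2T : 2 ≤ (T \ NS).card := by omega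
  obtain ⟨y, hy, y', hy', hyne⟩ := Finset.one_lt_card.mp (by omega : 1 < (T \ NS).card)
  rw [Finset.mem_sdiff] at hy hy'
  have hXS : (X \ S).card + S.card = X.card := Finset.card_sdiff_add_card_eq_card hS
  have hdegT : ∀ z, z ∈ T → z ∉ NS → deg A z ≤ NT.card + (X \ S).card := by
    intro z hzT hzNS
    refine deg_le (fun w h => hNTm z hzT w h) (fun w h => ?_)
    rw [Finset.mem_sdiff]
    refine ⟨hinY z (hT hzT) w h, fun hwS => hzNS (hNSm w hwS z h)⟩
  have hstep1 : 3 * a + 1 ≤ 2 * (NT.card + (X \ S).card) := by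
    have := hM y y' hyne (nonadjY y y' (hT hy.1) (hT hy'.1))
      (nonadjY y' y (hT hy'.1) (hT hy.1))
    have h1 := hdegT y hy.1 hy.2
    have h2 := hdegT y' hy'.1 hy'.2
    omega
  -- vertices of `X \ NT`
  have hXNT : X.card - NT.card ≤ (X \ NT).card := Finset.le_card_sdiff NT X
  have hYT : (Y \ T).card + T.card = Y.card := Finset.card_sdiff_add_card_eq_card hT
  have hdegXNT : ∀ z, z ∈ X → z ∉ NT → deg A z ≤ Y.card + (Y \ T).card := by
    intro z hzX hzNT
    refine deg_le (fun w h => houtX z hzX w h) (fun w h => ?_)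
    rw [Finset.mem_sdiff]
    refine ⟨hinX z hzX w h, fun hwT => hzNT (hNTm w hwT z h)⟩
  by_cases h2X : 2 ≤ (X \ NT).card
  · obtain ⟨x, hx, x', hx', hxne⟩ := Finset.one_lt_card.mp (by omega : 1 < (X \ NT).card)
    rw [Finset.mem_sdiff] at hx hx'
    have := hM x x' hxne (nonadjX x x' hx.1 hx'.1) (nonadjX x' x hx'.1 hx.1)
    have h1 := hdegXNT x hx.1 hx.2
    have h2 := hdegXNT x' hx'.1 hx'.2
    omega
  · -- then T.card = a and Y \ T is empty
    have h1X : 1 ≤ (X \ NT).card := by omega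
    obtain ⟨x, hx⟩ := Finset.card_pos.mp h1X
    rw [Finset.mem_sdiff] at hx
    have hyt0 : (Y \ T).card = 0 := by omega
    have hdx : deg A x ≤ a := by
      have := hdegXNT x hx.1 hx.2
      omega
    obtain ⟨x', hx', hxne⟩ := Finset.exists_mem_ne (by omega : 1 < X.card) x
    have hdx' : deg A x' ≤ a + a := by
      have := deg_le (fun w h => houtX x' hx' w h) (fun w h => hinX x' hx' w h)
      omega
    have := hM x x' (Ne.symm hxne) (nonadjX x x' hx.1 hx') (nonadjX x' x hx' hx.1)
    omega

/-- under condition (M), `D` contains a complete matching from `X` to `Y`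
or a complete matching from `Y` to `X`. -/
theorem stmt2 {V : Type} [Fintype V] [DecidableEq V] (A : V → V → Prop)
    (X Y : Finset V) (a : ℕ) (ha : 2 ≤ a)
    (hbb : BalancedBipartite A X Y a) (hM : CondM A a) :
    (∃ M : V → V, CompleteMatching A X Y M) ∨ (∃ M : V → V, CompleteMatching A Y X M) := by
  classical
  obtain ⟨hXc, hYc, hdisj, _hcover, hXY⟩ := hbb
  have hdl := Finset.disjoint_left.mp hdisj
  set tX : {x // x ∈ X} → Finset V := fun x => Y.filter (fun y => A x.1 y) with htX
  set tY : {y // y ∈ Y} → Finset V := fun y => X.filter (fun x => A y.1 x) with htY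
  by_cases hHX : ∀ s : Finset {x // x ∈ X}, s.card ≤ (s.biUnion tX).card
  · left
    obtain ⟨f, hfinj, hf⟩ := (Finset.all_card_le_biUnion_card_iff_existsInjective' tX).mp hHX
    refine ⟨fun v => if h : v ∈ X then f ⟨v, h⟩ else v, ?_, ?_⟩
    · intro x hx
      have := hf ⟨x, hx⟩
      rw [htX, Finset.mem_filter] at this
      simpa [dif_pos hx] using ⟨this.1, this.2⟩
    · intro u hu v hv h
      rw [Finset.mem_coe] at hu hv
      simp only [dif_pos hu, dif_pos hv] at h
      have := hfinj h
      exact congrArg Subtype.val this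
  · by_cases hHY : ∀ s : Finset {y // y ∈ Y}, s.card ≤ (s.biUnion tY).card
    · right
      obtain ⟨f, hfinj, hf⟩ := (Finset.all_card_le_biUnion_card_iff_existsInjective' tY).mp hHY
      refine ⟨fun v => if h : v ∈ Y then f ⟨v, h⟩ else v, ?_, ?_⟩
      · intro y hy
        have := hf ⟨y, hy⟩
        rw [htY, Finset.mem_filter] at this
        simpa [dif_pos hy] using ⟨this.1, this.2⟩
      · intro u hu v hv h
        rw [Finset.mem_coe] at hu hv
        simp only [dif_pos hu, dif_pos hv] at h
        have := hfinj h
        exact congrArg Subtype.val this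
    · exfalso
      push_neg at hHX hHY
      obtain ⟨sX, hsX⟩ := hHX
      obtain ⟨sY, hsY⟩ := hHY
      set S := sX.image Subtype.val with hSdef
      set T := sY.image Subtype.val with hTdef
      set NS := sX.biUnion tX with hNSdef
      set NT := sY.biUnion tY with hNTdef
      have hScard : S.card = sX.card := Finset.card_image_of_injective _ Subtype.val_injective
      have hTcard : T.card = sY.card := Finset.card_image_of_injective _ Subtype.val_injective
      have hSsub : S ⊆ X := by
        intro v hv
        rw [hSdef, Finset.mem_image] at hv
        obtain ⟨⟨w, hw⟩, _, rfl⟩ := hv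
        exact hw
      have hTsub : T ⊆ Y := by
        intro v hv
        rw [hTdef, Finset.mem_image] at hv
        obtain ⟨⟨w, hw⟩, _, rfl⟩ := hv
        exact hw
      have hNSsub : NS ⊆ Y := by
        intro v hv
        rw [hNSdef, Finset.mem_biUnion] at hv
        obtain ⟨x, _, hx⟩ := hv
        rw [htX, Finset.mem_filter] at hx
        exact hx.1
      have hNTsub : NT ⊆ X := by
        intro v hv
        rw [hNTdef, Finset.mem_biUnion] at hv
        obtain ⟨x, _, hx⟩ := hv
        rw [htY, Finset.mem_filter] at hx
        exact hx.1
      have hNSc : NS.card < S.card := by rw [hScard]; exact hsX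
      have hNTc : NT.card < T.card := by rw [hTcard]; exact hsY
      have hNSm : ∀ x ∈ S, ∀ y, A x y → y ∈ NS := by
        intro x hx y hxy
        rw [hSdef, Finset.mem_image] at hx
        obtain ⟨⟨w, hw⟩, hmem, rfl⟩ := hx
        rw [hNSdef, Finset.mem_biUnion]
        refine ⟨⟨w, hw⟩, hmem, ?_⟩
        rw [htX, Finset.mem_filter]
        refine ⟨?_, hxy⟩
        rcases hXY w y hxy with ⟨_, h2⟩ | ⟨h1, _⟩
        · exact h2
        · exact absurd h1 (fun h1 => hdl hw h1)
      have hNTm : ∀ y ∈ T, ∀ x, A y x → x ∈ NT := by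
        intro y hy x hyx
        rw [hTdef, Finset.mem_image] at hy
        obtain ⟨⟨w, hw⟩, hmem, rfl⟩ := hy
        rw [hNTdef, Finset.mem_biUnion]
        refine ⟨⟨w, hw⟩, hmem, ?_⟩
        rw [htY, Finset.mem_filter]
        refine ⟨?_, hyx⟩
        rcases hXY w x hyx with ⟨h1, _⟩ | ⟨_, h2⟩
        · exact absurd hw (hdl h1)
        · exact h2
      by_cases hc1 : S ⊆ NT
      · exact key_s2 ha hXc hYc hdisj hXY hM hSsub hTsub hNTsub hNSc hNTc hNSm hNTm hc1
      · by_cases hc2 : T ⊆ NS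
        · exact key_s2 ha hYc hXc hdisj.symm (fun u v h => (hXY u v h).symm) hM hTsub hSsub
            hNSsub hNTc hNSc hNTm hNSm hc2
        · -- case A: pick x ∈ S \ NT, y ∈ T \ NS, nonadjacent pair across classes
          obtain ⟨x, hxS, hxNT⟩ := Finset.not_subset.mp hc1
          obtain ⟨y, hyT, hyNS⟩ := Finset.not_subset.mp hc2
          have hxX : x ∈ X := hSsub hxS
          have hyY : y ∈ Y := hTsub hyT
          have hxy : x ≠ y := fun h => hdl hxX (h ▸ hyY)
          have hnxy : ¬ A x y := fun h => hyNS (hNSm x hxS y h)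
          have hnyx : ¬ A y x := fun h => hxNT (hNTm y hyT x h)
          have hdx : deg A x ≤ NS.card + (Y \ T).card := by
            refine deg_le (fun w h => hNSm x hxS w h) (fun w h => ?_)
            rw [Finset.mem_sdiff]
            constructor
            · rcases hXY w x h with ⟨_, h2⟩ | ⟨h1, _⟩
              · exact absurd h2 (hdl hxX)
              · exact h1
            · exact fun hwT => hxNT (hNTm w hwT x h)
          have hdy : deg A y ≤ NT.card + (X \ S).card := by
            refine deg_le (fun w h => hNTm y hyT w h) (fun w h => ?_)
            rw [Finset.mem_sdiff]
            constructor
            · rcases hXY w y h with ⟨h1, _⟩ | ⟨_, h2⟩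
              · exact h1
              · exact absurd hyY (fun hyy => hdl h2 hyy)
            · exact fun hwS => hyNS (hNSm w hwS y h)
          have hXS : (X \ S).card + S.card = X.card := Finset.card_sdiff_add_card_eq_card hSsub
          have hYT : (Y \ T).card + T.card = Y.card := Finset.card_sdiff_add_card_eq_card hTsub
          have := hM x y hxy hnxy hnyx
          omega

end BipDigraph
end

section
/- Let D be a balanced bipartite digraph with colour classes X, Y of cardinality a ≥ 2 satisfying condition (M). If D contains a complete matching from X to Y and no cycle of length 2a, then d⁺(v) ≥ 2 and d⁻(v) ≥ 2 for every vertex v of D. -/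
namespace BipDigraph

variable {V : Type}

def weave : List V → List V → List V
  | [], _ => []
  | _ :: _, [] => []
  | u :: us, w :: ws => u :: w :: weave us ws

lemma weave_length : ∀ us ws : List V, us.length = ws.length →
    (weave us ws).length = us.length + ws.length
  | [], _, _ => by cases ‹List V›  <;> simp_all [weave]
  | u :: us, [], h => by simp at h
  | u :: us, w :: ws, h => by
      simp only [weave, List.length_cons] at *
      rw [weave_length us ws (by omega)]; omega

lemma mem_weave : ∀ us ws : List V, ∀ x ∈ weave us ws, x ∈ us ∨ x ∈ ws
  | [], ws, x, h => by simp [weave] at h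
  | u :: us, [], x, h => by simp [weave] at h
  | u :: us, w :: ws, x, h => by
      simp only [weave, List.mem_cons] at h ⊢
      rcases h with h | h | h
      · tauto
      · tauto
      · rcases mem_weave us ws x h with h | h <;> tauto

lemma weave_nodup : ∀ us ws : List V, us.Nodup → ws.Nodup → (∀ x ∈ us, x ∉ ws) →
    (weave us ws).Nodup
  | [], ws, _, _, _ => by simp [weave]
  | u :: us, [], _, _, _ => by simp [weave]
  | u :: us, w :: ws, hu, hw, hd => by
      simp only [weave, List.nodup_cons] at *
      refine ⟨?_, ?_, weave_nodup us ws hu.2 hw.2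
        (fun x hx hxw => hd x (List.mem_cons_of_mem _ hx) (List.mem_cons_of_mem _ hxw))⟩
      · simp only [List.mem_cons]
        rintro (rfl | h)
        · exact hd u (List.mem_cons_self) (List.mem_cons_self)
        · rcases mem_weave us ws u h with h | h
          · exact hu.1 h
          · exact hd u (List.mem_cons_self) (List.mem_cons_of_mem _ h)
      · intro h
        rcases mem_weave us ws w h with h | h
        · exact hd w (List.mem_cons_of_mem _ h) (List.mem_cons_self)
        · exact hw.1 h

lemma weave_getLast? : ∀ us ws : List V, us.length = ws.length → ws ≠ [] →
    (weave us ws).getLast? = ws.getLast?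
  | [], ws, h, hne => by cases ws <;> simp_all
  | u :: us, [], h, hne => by simp at hne
  | u :: us, w :: ws, h, hne => by
      match us, ws, h with
      | [], [], _ => simp [weave]
      | u' :: us', w' :: ws', h => 
        have := weave_getLast? (u' :: us') (w' :: ws') (by simpa using h) (by simp)
        simp only [weave] at *
        rw [List.getLast?_cons_cons, List.getLast?_cons_cons, this,
          List.getLast?_cons_cons]

lemma weave_chain (A : V → V → Prop) (P : V → Prop) :
    ∀ us ws : List V, us.length = ws.length →
    (∀ u ∈ us, ∀ w, P w → A u w ∧ A w u) → (∀ w ∈ ws, P w) →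
    List.Chain' A (weave us ws)
  | [], ws, h, _, _ => by cases ws <;> simp_all [weave, List.Chain', List.isChain_nil]
  | u :: us, [], h, _, _ => by simp at h
  | u :: us, w :: ws, h, hfull, hP => by
      have hAuw : A u w := (hfull u (by simp) w (hP w (by simp))).1
      match us, ws, h with
      | [], [], _ => simpa [weave, List.Chain', List.isChain_pair] using hAuw
      | u' :: us', w' :: ws', h =>
        have ih := weave_chain A P (u' :: us') (w' :: ws') (by simpa using h)
          (fun x hx => hfull x (by simp [List.mem_cons] at hx ⊢; tauto))
          (fun x hx => hP x (by simp [List.mem_cons] at hx ⊢; tauto))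
        have hAwu' : A w u' := (hfull u' (by simp) w (hP w (by simp))).2
        simp only [weave] at ih ⊢
        exact List.IsChain.cons_cons hAuw (List.IsChain.cons_cons hAwu' ih)


section Deg

variable [Fintype V] (A : V → V → Prop)

lemma outdeg_eq_ncard (v : V) : outdeg A v = ({w | A v w} : Set V).ncard := by
  rw [outdeg, ← Nat.card_coe_set_eq]
  rfl

lemma indeg_eq_ncard (v : V) : indeg A v = ({w | A w v} : Set V).ncard := by
  rw [indeg, ← Nat.card_coe_set_eq]
  rfl

lemma outdeg_le (v : V) (C' : Finset V) (h : ∀ w, A v w → w ∈ C') :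
    outdeg A v ≤ C'.card := by
  rw [outdeg_eq_ncard, ← Set.ncard_coe_finset]
  exact Set.ncard_le_ncard (fun w hw => h w hw) (Set.toFinite _)

lemma indeg_le (v : V) (C' : Finset V) (h : ∀ w, A w v → w ∈ C') :
    indeg A v ≤ C'.card := by
  rw [indeg_eq_ncard, ← Set.ncard_coe_finset]
  exact Set.ncard_le_ncard (fun w hw => h w hw) (Set.toFinite _)

lemma outdeg_full (v : V) (C' : Finset V) (h : ∀ w, A v w → w ∈ C')
    (heq : outdeg A v = C'.card) : ∀ w ∈ C', A v w := by
  have hsub : ({w | A v w} : Set V) ⊆ ↑C' := fun w hw => h w hw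
  have := Set.eq_of_subset_of_ncard_le hsub
    (by rw [Set.ncard_coe_finset, ← heq, outdeg_eq_ncard]) (Set.toFinite _)
  intro w hw
  have : w ∈ ({w | A v w} : Set V) := this ▸ (by simpa using hw)
  exact this

lemma indeg_full (v : V) (C' : Finset V) (h : ∀ w, A w v → w ∈ C')
    (heq : indeg A v = C'.card) : ∀ w ∈ C', A w v := by
  have hsub : ({w | A w v} : Set V) ⊆ ↑C' := fun w hw => h w hw
  have := Set.eq_of_subset_of_ncard_le hsub
    (by rw [Set.ncard_coe_finset, ← heq, indeg_eq_ncard]) (Set.toFinite _)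
  intro w hw
  have : w ∈ ({w | A w v} : Set V) := this ▸ (by simpa using hw)
  exact this

lemma outdeg_one (v : V) (h : outdeg A v = 1) : ∃ w0, A v w0 ∧ ∀ w, A v w → w = w0 := by
  rw [outdeg_eq_ncard, Set.ncard_eq_one] at h
  obtain ⟨w0, hw0⟩ := h
  refine ⟨w0, ?_, fun w hw => ?_⟩
  · have : w0 ∈ ({w | A v w} : Set V) := hw0 ▸ rfl
    exact this
  · have : w ∈ ({w0} : Set V) := hw0 ▸ hw
    exact this

lemma indeg_one (v : V) (h : indeg A v = 1) : ∃ w0, A w0 v ∧ ∀ w, A w v → w = w0 := by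
  rw [indeg_eq_ncard, Set.ncard_eq_one] at h
  obtain ⟨w0, hw0⟩ := h
  refine ⟨w0, ?_, fun w hw => ?_⟩
  · have : w0 ∈ ({w | A w v} : Set V) := hw0 ▸ rfl
    exact this
  · have : w ∈ ({w0} : Set V) := hw0 ▸ hw
    exact this

end Deg



lemma build_cycle [DecidableEq V] (A : V → V → Prop) (C C' : Finset V) (a : ℕ) (ha : 2 ≤ a)
    (hC : C.card = a) (hC' : C'.card = a) (hdisj : Disjoint C C')
    (v w0 wst : V) (hv : v ∈ C) (hw0 : w0 ∈ C') (hwst : wst ∈ C') (hne : w0 ≠ wst)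
    (hvw0 : A v w0) (hwstv : A wst v)
    (hfull : ∀ u ∈ C, u ≠ v → ∀ w ∈ C', A u w ∧ A w u) :
    HasCycleOfLength A (2 * a) := by
  classical
  obtain ⟨us, hus⟩ : ∃ us : List V, us = (C.erase v).toList := ⟨_, rfl⟩
  obtain ⟨zs, hzs⟩ : ∃ zs : List V, zs = ((C'.erase w0).erase wst).toList := ⟨_, rfl⟩
  obtain ⟨ws, hws⟩ : ∃ ws : List V, ws = zs ++ [wst] := ⟨_, rfl⟩
  have hmemus : ∀ x, x ∈ us → x ∈ C ∧ x ≠ v := by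
    intro x hx
    rw [hus, Finset.mem_toList, Finset.mem_erase] at hx
    exact ⟨hx.2, hx.1⟩
  have hmemws : ∀ x, x ∈ ws → x ∈ C' := by
    intro x hx
    rw [hws, List.mem_append] at hx
    rcases hx with hx | hx
    · rw [hzs, Finset.mem_toList, Finset.mem_erase, Finset.mem_erase] at hx
      exact hx.2.2
    · simp at hx; subst hx; exact hwst
  have hlus : us.length = a - 1 := by
    rw [hus, Finset.length_toList, Finset.card_erase_of_mem hv, hC]
  have hlzs : zs.length = a - 2 := by
    rw [hzs, Finset.length_toList, Finset.card_erase_of_mem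
      (Finset.mem_erase.mpr ⟨Ne.symm hne, hwst⟩), Finset.card_erase_of_mem hw0, hC']
    omega
  have hlws : ws.length = a - 1 := by
    rw [hws, List.length_append, hlzs]; simp; omega
  have hlen : us.length = ws.length := by omega
  have husfull : ∀ u ∈ us, ∀ w, w ∈ C' → A u w ∧ A w u := by
    intro u hu w hw
    obtain ⟨huC, huv⟩ := hmemus u hu
    exact hfull u huC huv w hw
  -- destructure
  have husne : us ≠ [] := by
    intro h; rw [h] at hlus; simp at hlus; omega
  obtain ⟨u1, us', rfl⟩ : ∃ u1 us', us = u1 :: us' := by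
    cases h : us with
    | nil => exact absurd h husne
    | cons a b => exact ⟨a, b, rfl⟩
  refine ⟨v :: w0 :: weave (u1 :: us') ws, ⟨?_, ?_, v, rfl, ?_⟩, ?_⟩
  · simp
  · -- Nodup
    have hwnd : (weave (u1 :: us') ws).Nodup := by
      apply weave_nodup
      · rw [hus]; exact Finset.nodup_toList _
      · rw [hws]
        refine List.Nodup.append ?_ (by simp) ?_
        · rw [hzs]; exact Finset.nodup_toList _
        · intro x hx hx2
          simp at hx2; subst hx2
          rw [hzs, Finset.mem_toList, Finset.mem_erase] at hx
          exact hx.1 rfl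
      · intro x hx hxws
        have := hmemws x hxws
        exact Finset.disjoint_left.mp hdisj (hmemus x hx).1 this
    refine List.nodup_cons.mpr ⟨?_, List.nodup_cons.mpr ⟨?_, hwnd⟩⟩
    · simp only [List.mem_cons]
      rintro (rfl | h)
      · exact Finset.disjoint_left.mp hdisj hv hw0
      · rcases mem_weave _ _ v h with h | h
        · exact (hmemus v h).2 rfl
        · exact Finset.disjoint_left.mp hdisj hv (hmemws v h)
    · intro h
      rcases mem_weave _ _ w0 h with h | h
      · exact Finset.disjoint_left.mp hdisj (hmemus w0 h).1 hw0
      · rw [hws, List.mem_append] at h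
        rcases h with h | h
        · rw [hzs, Finset.mem_toList, Finset.mem_erase, Finset.mem_erase] at h
          exact h.2.1 rfl
        · simp at h; exact hne h
  · -- Chain'
    have hwsne : ws ≠ [] := by rw [hws]; simp
    obtain ⟨z1, ws', rfl⟩ : ∃ z1 ws', ws = z1 :: ws' := by
      cases h : ws with
      | nil => exact absurd h hwsne
      | cons a b => exact ⟨a, b, rfl⟩
    have hchain : List.Chain' A (weave (u1 :: us') (z1 :: ws')) :=
      weave_chain A (· ∈ C') _ _ hlen husfull hmemws
    have hlast : (weave (u1 :: us') (z1 :: ws')).getLast? = some wst := by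
      rw [weave_getLast? _ _ hlen (by simp)]
      rw [hws] at *
      exact hws ▸ List.getLast?_concat
    have hchain2 : List.Chain' A (weave (u1 :: us') (z1 :: ws') ++ [v]) := by
      rw [List.Chain', List.isChain_append]
      refine ⟨hchain, by simp, ?_⟩
      intro x hx y hy
      simp at hy; subst hy
      rw [hlast] at hx; simp at hx; subst hx
      exact hwstv
    have : (v :: w0 :: weave (u1 :: us') (z1 :: ws')) ++ [v]
        = v :: w0 :: (weave (u1 :: us') (z1 :: ws') ++ [v]) := by simp
    rw [this]
    refine List.IsChain.cons_cons hvw0 ?_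
    have hhead : weave (u1 :: us') (z1 :: ws') = u1 :: z1 :: weave us' ws' := rfl
    rw [hhead] at hchain2 ⊢
    exact List.IsChain.cons_cons ((husfull u1 (by simp) w0 hw0).2) hchain2
  · -- length
    simp only [List.length_cons]
    rw [weave_length _ _ hlen, hlus, hlws]
    omega


lemma key_s3 [Fintype V] [DecidableEq V] (A : V → V → Prop) (C C' : Finset V) (a : ℕ)
    (ha : 2 ≤ a) (hC : C.card = a) (hC' : C'.card = a) (hdisj : Disjoint C C')
    (harcs : ∀ u w, A u w → (u ∈ C ∧ w ∈ C') ∨ (u ∈ C' ∧ w ∈ C))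
    (hM : CondM A a) (v : V) (hv : v ∈ C)
    (hlow : outdeg A v ≤ 1 ∨ indeg A v ≤ 1) :
    HasCycleOfLength A (2 * a) := by
  -- arcs out of a vertex of C land in C', etc.
  have houtC : ∀ u ∈ C, ∀ w, A u w → w ∈ C' := by
    intro u hu w hw
    rcases harcs u w hw with ⟨_, h⟩ | ⟨h, _⟩
    · exact h
    · exact absurd hu (Finset.disjoint_right.mp hdisj h)
  have hinC : ∀ u ∈ C, ∀ w, A w u → w ∈ C' := by
    intro u hu w hw
    rcases harcs w u hw with ⟨h, h2⟩ | ⟨h, _⟩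
    · exact absurd hu (Finset.disjoint_right.mp hdisj h2)
    · exact h
  have hnadj : ∀ u ∈ C, ∀ u' ∈ C, ¬ A u u' := by
    intro u hu u' hu' h
    rcases harcs u u' h with ⟨_, h2⟩ | ⟨h2, _⟩ <;>
      exact absurd ‹_› (Finset.disjoint_right.mp hdisj h2)
  -- degree bounds for vertices of C
  have hdegle : ∀ u ∈ C, deg A u ≤ 2 * a := by
    intro u hu
    have h1 := outdeg_le A u C' (houtC u hu)
    have h2 := indeg_le A u C' (hinC u hu)
    rw [hC'] at h1 h2
    rw [deg]; omega
  -- every vertex of C other than v has degree 3a+1 - deg v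
  have hclassM : ∀ u ∈ C, u ≠ v → 3 * a + 1 ≤ deg A u + deg A v := by
    intro u hu huv
    exact hM u v huv (hnadj u hu v hv) (hnadj v hv u hu)
  -- deg v ≥ a + 1
  have hdegv : a + 1 ≤ deg A v := by
    obtain ⟨u, hu, huv⟩ := Finset.exists_mem_ne (by omega : 1 < C.card) v
    have := hclassM u hu huv
    have := hdegle u hu
    omega
  have houtle : outdeg A v ≤ a := by rw [← hC']; exact outdeg_le A v C' (houtC v hv)
  have hinle : indeg A v ≤ a := by rw [← hC']; exact indeg_le A v C' (hinC v hv)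
  have hdegv' : deg A v = a + 1 := by
    rw [deg] at *
    rcases hlow with h | h <;> omega
  -- all classmates are full
  have hfull : ∀ u ∈ C, u ≠ v → ∀ w ∈ C', A u w ∧ A w u := by
    intro u hu huv
    have h1 := hclassM u hu huv
    have h2 := hdegle u hu
    have h3 : deg A u = 2 * a := by omega
    have h4 := outdeg_le A u C' (houtC u hu)
    have h5 := indeg_le A u C' (hinC u hu)
    rw [deg] at h3
    rw [hC'] at h4 h5
    have hout : outdeg A u = C'.card := by rw [hC']; omega
    have hin : indeg A u = C'.card := by rw [hC']; omega
    intro w hw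
    exact ⟨outdeg_full A u C' (houtC u hu) hout w hw,
      indeg_full A u C' (hinC u hu) hin w hw⟩
  -- obtain w0 (out-neighbour) and wst (in-neighbour), distinct
  obtain ⟨w0, wst, hw0, hwst, hne, hvw0, hwstv⟩ :
      ∃ w0 wst, w0 ∈ C' ∧ wst ∈ C' ∧ w0 ≠ wst ∧ A v w0 ∧ A wst v := by
    rcases hlow with h | h
    · -- outdeg v = 1, indeg v = a
      have hout1 : outdeg A v = 1 := by rw [deg] at hdegv'; omega
      have hina : indeg A v = a := by rw [deg] at hdegv'; omega
      obtain ⟨w0, hvw0, _⟩ := outdeg_one A v hout1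
      have hw0 : w0 ∈ C' := houtC v hv w0 hvw0
      have hinfull : ∀ w ∈ C', A w v :=
        indeg_full A v C' (hinC v hv) (by rw [hC']; exact hina)
      obtain ⟨wst, hwst, hnewst⟩ :=
        Finset.exists_mem_ne (by omega : 1 < C'.card) w0
      exact ⟨w0, wst, hw0, hwst, (Ne.symm hnewst), hvw0, hinfull wst hwst⟩
    · -- indeg v = 1, outdeg v = a
      have hin1 : indeg A v = 1 := by rw [deg] at hdegv'; omega
      have houta : outdeg A v = a := by rw [deg] at hdegv'; omega
      obtain ⟨wst, hwstv, _⟩ := indeg_one A v hin1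
      have hwst : wst ∈ C' := hinC v hv wst hwstv
      have houtfull : ∀ w ∈ C', A v w :=
        outdeg_full A v C' (houtC v hv) (by rw [hC']; exact houta)
      obtain ⟨w0, hw0, hnew0⟩ :=
        Finset.exists_mem_ne (by omega : 1 < C'.card) wst
      exact ⟨w0, wst, hw0, hwst, hnew0, houtfull w0 hw0, hwstv⟩
  exact build_cycle A C C' a ha hC hC' hdisj v w0 wst hv hw0 hwst hne hvw0 hwstv hfull

/-- under condition (M), if `D` contains a complete matching from `X` to `Y`
and no cycle of length `2a`, then every vertex has out-degree and in-degree at least 2. -/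
theorem stmt3 {V : Type} [Fintype V] [DecidableEq V] (A : V → V → Prop)
    (X Y : Finset V) (a : ℕ) (ha : 2 ≤ a)
    (hbb : BalancedBipartite A X Y a) (hM : CondM A a)
    (hmatch : ∃ M : V → V, CompleteMatching A X Y M)
    (hnoham : ¬ HasCycleOfLength A (2 * a)) :
    ∀ v : V, 2 ≤ outdeg A v ∧ 2 ≤ indeg A v := by
  obtain ⟨hX, hY, hdisj, hcov, harcs⟩ := hbb
  intro v
  have harcs' : ∀ u w, A u w → (u ∈ Y ∧ w ∈ X) ∨ (u ∈ X ∧ w ∈ Y) := by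
    intro u w h; exact (harcs u w h).symm
  have hkey : outdeg A v ≤ 1 ∨ indeg A v ≤ 1 → False := by
    intro hlow
    apply hnoham
    rcases hcov v with hvX | hvY
    · exact key_s3 A X Y a ha hX hY hdisj harcs hM v hvX hlow
    · exact key_s3 A Y X a ha hY hX hdisj.symm harcs' hM v hvY hlow
  constructor
  · by_contra h; exact hkey (Or.inl (by omega))
  · by_contra h; exact hkey (Or.inr (by omega))

end BipDigraph
end

section
/- Let D be a balanced bipartite digraph with colour classes X and Y of cardinality a ≥ 2 satisfying condition (M). Suppose D contains a complete matching M from X to Y and D contains no oriented cycle of length 2a. Then for every pair of distinct vertices u, v of D, there is an oriented path from u to v compatible with M. -/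
/-! By condition (M) every vertex has degree at least `a + 1`. A vertex of `Y` with
out-degree at most one (or of `X` with in-degree at most one) would force every other vertex
of its class to have degree `2a`, and then `D` has a cycle of length `2a`. Contract the arcs
of `M` to obtain a digraph on `X`. Counting degrees with (M) shows that every proper nonempty
subset of `X` has an arc leaving it there, so the contracted digraph is strongly connected.
A path `x₀ x₁ … xₖ` in it lifts to the `M`-compatible path `x₀ (M x₀) x₁ (M x₁) … xₖ (M xₖ)`
of `D`; dropping its first or last vertex lets it start and end anywhere, and a lift ending
at the mate of an in-neighbour of `x₀` can be closed up by `x₀` itself. -/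

namespace BipDigraph

variable {V : Type}

theorem natCard_subtype_le_card {P : V → Prop} {s : Finset V} (h : ∀ w, P w → w ∈ s) :
    Nat.card {w // P w} ≤ s.card := by
  change Nat.card ({w | P w} : Set V) ≤ s.card
  rw [Nat.card_coe_set_eq, ← Set.ncard_coe_finset]
  exact Set.ncard_le_ncard h s.finite_toSet

theorem forall_of_card_le_natCard_subtype {P : V → Prop} {s : Finset V}
    (h : ∀ w, P w → w ∈ s) (hs : s.card ≤ Nat.card {w // P w}) : ∀ w ∈ s, P w := by
  change s.card ≤ Nat.card ({w | P w} : Set V) at hs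
  rw [Nat.card_coe_set_eq, ← Set.ncard_coe_finset] at hs
  intro w hw
  have hw' : w ∈ ({w | P w} : Set V) := Set.eq_of_subset_of_ncard_le h hs s.finite_toSet ▸ hw
  exact hw'

theorem exists_of_one_le_natCard_subtype {P : V → Prop} (h : 1 ≤ Nat.card {w // P w}) :
    ∃ w, P w :=
  let ⟨⟨w, hw⟩⟩ := (Nat.card_pos_iff.1 h).1
  ⟨w, hw⟩

theorem arcs_of_two_mul_card_le_deg {A : V → V → Prop} {v : V} {s : Finset V}
    (hout : ∀ w, A v w → w ∈ s) (hin : ∀ w, A w v → w ∈ s) (hdeg : 2 * s.card ≤ deg A v) :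
    ∀ w ∈ s, A v w ∧ A w v := by
  have := natCard_subtype_le_card hout
  have := natCard_subtype_le_card hin
  intro w hw
  exact ⟨forall_of_card_le_natCard_subtype hout (by unfold deg outdeg indeg at hdeg; omega) w hw,
    forall_of_card_le_natCard_subtype hin (by unfold deg outdeg indeg at hdeg; omega) w hw⟩

namespace BalancedBipartite

variable {A : V → V → Prop} {X Y : Finset V} {a : ℕ}

theorem not_mem_Y (hbb : BalancedBipartite A X Y a) {x : V} (hx : x ∈ X) : x ∉ Y :=
  Finset.disjoint_left.mp hbb.2.2.1 hx

theorem not_mem_X (hbb : BalancedBipartite A X Y a) {y : V} (hy : y ∈ Y) : y ∉ X :=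
  Finset.disjoint_right.mp hbb.2.2.1 hy

theorem nbhd_subset_Y (hbb : BalancedBipartite A X Y a) {v : V} (hv : v ∈ X) :
    (∀ w, A v w → w ∈ Y) ∧ ∀ w, A w v → w ∈ Y := by
  refine ⟨fun w h => ?_, fun w h => ?_⟩ <;> rcases hbb.2.2.2.2 _ _ h with h' | h'
  exacts [h'.2, absurd hv (hbb.not_mem_X h'.1), absurd hv (hbb.not_mem_X h'.2), h'.1]

theorem nbhd_subset_X (hbb : BalancedBipartite A X Y a) {v : V} (hv : v ∈ Y) :
    (∀ w, A v w → w ∈ X) ∧ ∀ w, A w v → w ∈ X := by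
  refine ⟨fun w h => ?_, fun w h => ?_⟩ <;> rcases hbb.2.2.2.2 _ _ h with h' | h'
  exacts [absurd h'.1 (hbb.not_mem_X hv), h'.2, h'.1, absurd h'.2 (hbb.not_mem_X hv)]

theorem exists_opposite (hbb : BalancedBipartite A X Y a) (v : V) :
    ∃ s : Finset V, s.card = a ∧ (∀ w, A v w → w ∈ s) ∧ ∀ w, A w v → w ∈ s := by
  rcases hbb.2.2.2.1 v with hv | hv
  exacts [⟨Y, hbb.2.1, hbb.nbhd_subset_Y hv⟩, ⟨X, hbb.1, hbb.nbhd_subset_X hv⟩]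

theorem outdeg_le (hbb : BalancedBipartite A X Y a) (v : V) : outdeg A v ≤ a := by
  obtain ⟨s, hs, hout, -⟩ := hbb.exists_opposite v
  exact hs ▸ natCard_subtype_le_card hout

theorem indeg_le (hbb : BalancedBipartite A X Y a) (v : V) : indeg A v ≤ a := by
  obtain ⟨s, hs, -, hin⟩ := hbb.exists_opposite v
  exact hs ▸ natCard_subtype_le_card hin

theorem three_mul_add_one_le_deg_add_deg (hbb : BalancedBipartite A X Y a) (hM : CondM A a)
    {p q : V} (hpq : p ≠ q) (hs : p ∈ X ∧ q ∈ X ∨ p ∈ Y ∧ q ∈ Y) :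
    3 * a + 1 ≤ deg A p + deg A q := by
  refine hM p q hpq ?_ ?_ <;> rcases hs with ⟨hp, hq⟩ | ⟨hp, hq⟩
  exacts [fun h => hbb.not_mem_Y hq ((hbb.nbhd_subset_Y hp).1 q h),
    fun h => hbb.not_mem_X hq ((hbb.nbhd_subset_X hp).1 q h),
    fun h => hbb.not_mem_Y hp ((hbb.nbhd_subset_Y hq).1 p h),
    fun h => hbb.not_mem_X hp ((hbb.nbhd_subset_X hq).1 p h)]

theorem add_one_le_deg (ha : 2 ≤ a) (hbb : BalancedBipartite A X Y a) (hM : CondM A a)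
    (v : V) : a + 1 ≤ deg A v := by
  obtain ⟨w, hwv, hs⟩ : ∃ w, v ≠ w ∧ (v ∈ X ∧ w ∈ X ∨ v ∈ Y ∧ w ∈ Y) := by
    rcases hbb.2.2.2.1 v with hv | hv
    · obtain ⟨w, hw, hwv⟩ := Finset.exists_mem_ne (hbb.1 ▸ ha) v
      exact ⟨w, hwv.symm, .inl ⟨hv, hw⟩⟩
    · obtain ⟨w, hw, hwv⟩ := Finset.exists_mem_ne (hbb.2.1 ▸ ha) v
      exact ⟨w, hwv.symm, .inr ⟨hv, hw⟩⟩
  have := hbb.three_mul_add_one_le_deg_add_deg hM hwv hs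
  have := hbb.outdeg_le w
  have := hbb.indeg_le w
  unfold deg at *
  omega

end BalancedBipartite

section WithMates

variable {f : V → V}

def withMates (f : V → V) : List V → List V
  | [] => []
  | x :: l => x :: f x :: withMates f l

@[simp] theorem withMates_nil : withMates f [] = [] := rfl

@[simp] theorem withMates_cons (x : V) (l : List V) :
    withMates f (x :: l) = x :: f x :: withMates f l := rfl

@[simp] theorem withMates_append (l₁ l₂ : List V) :
    withMates f (l₁ ++ l₂) = withMates f l₁ ++ withMates f l₂ := by
  induction l₁ <;> simp [*]

@[simp] theorem length_withMates (l : List V) : (withMates f l).length = 2 * l.length := by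
  induction l <;> simp [*]; ring

@[simp] theorem head?_withMates (l : List V) : (withMates f l).head? = l.head? := by
  cases l <;> rfl

theorem getLast?_withMates (l : List V) : (withMates f l).getLast? = l.getLast?.map f := by
  induction l using List.reverseRecOn <;> simp

theorem mem_withMates {l : List V} {z : V} :
    z ∈ withMates f l ↔ z ∈ l ∨ ∃ x ∈ l, f x = z := by
  induction l with
  | nil => simp
  | cons x l ih => simp only [withMates_cons, List.mem_cons, ih]; grind

theorem nodup_withMates {S : Set V} {l : List V} (hl : l.Nodup) (hS : ∀ x ∈ l, x ∈ S)
    (hinj : S.InjOn f) (hf : ∀ x ∈ S, f x ∉ S) : (withMates f l).Nodup := by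
  induction l with
  | nil => simp
  | cons x l ih =>
    obtain ⟨hxl, hl⟩ := List.nodup_cons.1 hl
    have hxS := hS x (by simp)
    have hlS : ∀ y ∈ l, y ∈ S := fun y hy => hS y (by simp [hy])
    simp only [withMates_cons, List.nodup_cons, List.mem_cons, mem_withMates, not_or,
      not_exists, not_and]
    refine ⟨⟨fun h => hf x hxS (h ▸ hxS), hxl, fun y hy h => hf y (hlS y hy) (h ▸ hxS)⟩,
      ⟨fun h => hf x hxS (hlS _ h), fun y hy h => hxl (hinj (hlS y hy) hxS h ▸ hy)⟩, ih hl hlS⟩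

theorem isChain_withMates {R : V → V → Prop} {l : List V} (hf : ∀ x ∈ l, R x (f x))
    (hl : l.IsChain (fun x y => R (f x) y)) : (withMates f l).IsChain R := by
  induction l with
  | nil => exact .nil
  | cons x l ih =>
    rw [List.isChain_cons] at hl
    simp only [withMates_cons, List.isChain_cons, List.head?_cons, head?_withMates,
      Option.mem_def, Option.some.injEq, forall_eq']
    exact ⟨hf x (by simp), hl.1, ih (fun y hy => hf y (by simp [hy])) hl.2⟩

end WithMates

section Alternating

variable {P Q : V → V → Prop}

theorem Alt.tail {x : V} {l : List V} (h : Alt P Q (x :: l)) : Alt Q P l := by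
  cases l
  exacts [trivial, h.2]

theorem Alt.left_of_append {l₁ l₂ : List V} (h : Alt P Q (l₁ ++ l₂)) : Alt P Q l₁ := by
  induction l₁ generalizing P Q with
  | nil => trivial
  | cons x l ih =>
    cases l with
    | nil => trivial
    | cons y l => exact ⟨h.1, ih h.2⟩

theorem Alt.right_of_append {l₁ l₂ : List V} (h : Alt P Q (l₁ ++ l₂)) :
    Alt P Q l₂ ∨ Alt Q P l₂ := by
  induction l₁ generalizing P Q with
  | nil => exact .inl h
  | cons x l ih => exact (ih h.tail).symm

theorem Alt.infix {l₁ l : List V} (h : Alt P Q l) (h' : l₁ <:+: l) :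
    Alt P Q l₁ ∨ Alt Q P l₁ := by
  obtain ⟨s, t, rfl⟩ := h'
  exact (Alt.left_of_append h).right_of_append

end Alternating

theorem exists_mapsTo_injOn_apply_eq {α β : Type*} {s : Finset α} {t : Finset β}
    (hst : s.card = t.card) {a : α} {b : β} (ha : a ∈ s) (hb : b ∈ t) :
    ∃ g : α → β, Set.MapsTo g s t ∧ Set.InjOn g s ∧ g a = b := by
  classical
  have : Nonempty β := ⟨b⟩
  obtain ⟨f, hf⟩ := s.finite_toSet.exists_bijOn_of_encard_eq (t := (t : Set β)) (by simp [hst])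
  refine ⟨Equiv.swap (f a) b ∘ f, fun x hx => ?_, (Equiv.injective _).comp_injOn hf.injOn,
    by simp⟩
  have := hf.mapsTo hx
  have := hf.mapsTo ha
  simp only [Function.comp_apply, Equiv.swap_apply_def]
  split_ifs <;> simp_all

section Cycle

variable {A : V → V → Prop} {X Y : Finset V} {a : ℕ}

theorem hasCycleOfLength_of_pairing (ha : 2 ≤ a) (hbb : BalancedBipartite A X Y a)
    {g : V → V} (hg : Set.MapsTo g Y X) (hginj : Set.InjOn g Y) (hA : ∀ y ∈ Y, A y (g y))
    (hgA : ∀ y ∈ Y, ∀ y' ∈ Y, y ≠ y' → A (g y) y') : HasCycleOfLength A (2 * a) := by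
  obtain ⟨z, w, l, hL⟩ : ∃ z w l, Y.toList = z :: w :: l := by
    match h : Y.toList with
    | z :: w :: l => exact ⟨z, w, l, rfl⟩
    | [] | [_] => have := congrArg List.length h; simp [hbb.2.1] at this; omega
  have hnd : (z :: w :: l).Nodup := hL ▸ Y.nodup_toList
  have hY : ∀ y ∈ z :: w :: l, y ∈ Y := fun y hy => Finset.mem_toList.1 (hL ▸ hy)
  have hY' : ∀ y ∈ z :: w :: (l ++ [z]), y ∈ Y := fun y hy => hY y (by simp at hy ⊢; tauto)
  have hchain : (z :: w :: (l ++ [z])).IsChain (fun y y' => A (g y) y') := by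
    refine List.isChain_cons_cons.2 ⟨hgA z (hY z (by simp)) w (hY w (by simp)) ?_, ?_⟩
    · exact fun h => (List.nodup_cons.1 hnd).1 (h ▸ List.mem_cons_self)
    · exact ((List.perm_append_singleton z (w :: l)).nodup_iff.2 hnd).isChain.imp_of_mem_imp
        fun y y' hy hy' => hgA y (hY' y (.tail z hy)) y' (hY' y' (.tail z hy'))
  refine ⟨withMates g (z :: w :: l), ⟨by simp, ?_, z, rfl, ?_⟩, ?_⟩
  · exact nodup_withMates hnd hY hginj fun y hy => hbb.not_mem_Y (hg hy)
  · exact (isChain_withMates (fun y hy => hA y (hY' y hy)) hchain).prefix ⟨[g z], by simp⟩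
  · have := congrArg List.length hL
    simp only [Finset.length_toList, hbb.2.1, List.length_cons] at this
    simp only [length_withMates, List.length_cons]
    omega

theorem hasCycleOfLength_two_mul (ha : 2 ≤ a) (hbb : BalancedBipartite A X Y a)
    {x₀ y₀ : V} (hx₀ : x₀ ∈ X) (hy₀ : y₀ ∈ Y) (h₀ : A y₀ x₀)
    (hx₀Y : ∀ y ∈ Y, y ≠ y₀ → A x₀ y) (hXy₀ : ∀ x ∈ X, x ≠ x₀ → A x y₀)
    (hXY : ∀ x ∈ X, x ≠ x₀ → ∀ y ∈ Y, y ≠ y₀ → A x y ∧ A y x) :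
    HasCycleOfLength A (2 * a) := by
  obtain ⟨g, hgY, hginj, hg₀⟩ :=
    exists_mapsTo_injOn_apply_eq (hbb.2.1.trans hbb.1.symm) hy₀ hx₀
  have hgx₀ : ∀ y ∈ Y, y ≠ y₀ → g y ≠ x₀ := fun y hy hne h =>
    hne (hginj hy hy₀ (h.trans hg₀.symm))
  refine hasCycleOfLength_of_pairing ha hbb hgY hginj (fun y hy => ?_) fun y hy y' hy' hne => ?_
  · by_cases h : y = y₀
    · exact h ▸ hg₀ ▸ h₀
    · exact (hXY _ (hgY hy) (hgx₀ y hy h) y hy h).2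
  · by_cases h : y = y₀
    · exact h ▸ hg₀ ▸ hx₀Y y' hy' (h ▸ hne).symm
    by_cases h' : y' = y₀
    · exact h' ▸ hXy₀ _ (hgY hy) (hgx₀ y hy h)
    · exact (hXY _ (hgY hy) (hgx₀ y hy h) y' hy' h').1

end Cycle

section LowDegree

variable {A : V → V → Prop} {X Y : Finset V} {a : ℕ}

theorem two_le_outdeg_of_mem_Y (ha : 2 ≤ a) (hbb : BalancedBipartite A X Y a)
    (hM : CondM A a) (hnoham : ¬ HasCycleOfLength A (2 * a)) {y₀ : V} (hy₀ : y₀ ∈ Y) :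
    2 ≤ outdeg A y₀ := by
  by_contra! hlt
  have hdeg := hbb.add_one_le_deg ha hM y₀
  have hin := hbb.indeg_le y₀
  unfold deg at hdeg
  obtain ⟨x₀, hx₀⟩ := exists_of_one_le_natCard_subtype (by omega : 1 ≤ outdeg A y₀)
  have hx₀X := (hbb.nbhd_subset_X hy₀).1 x₀ hx₀
  have hXy₀ : ∀ x ∈ X, A x y₀ := forall_of_card_le_natCard_subtype (hbb.nbhd_subset_X hy₀).2
    (by rw [hbb.1]; exact (by omega : a ≤ indeg A y₀))
  have hY : ∀ y ∈ Y, y ≠ y₀ → ∀ x ∈ X, A y x ∧ A x y := by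
    intro y hy hne
    have := hbb.three_mul_add_one_le_deg_add_deg hM hne (.inr ⟨hy, hy₀⟩)
    refine arcs_of_two_mul_card_le_deg (hbb.nbhd_subset_X hy).1 (hbb.nbhd_subset_X hy).2 ?_
    rw [hbb.1]
    unfold deg at this ⊢
    omega
  exact hnoham <| hasCycleOfLength_two_mul ha hbb hx₀X hy₀ hx₀
    (fun y hy hne => (hY y hy hne x₀ hx₀X).2) (fun x hx _ => hXy₀ x hx)
    fun x hx _ y hy hne => (hY y hy hne x hx).symm

theorem two_le_indeg_of_mem_X (ha : 2 ≤ a) (hbb : BalancedBipartite A X Y a)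
    (hM : CondM A a) (hnoham : ¬ HasCycleOfLength A (2 * a)) {x₀ : V} (hx₀ : x₀ ∈ X) :
    2 ≤ indeg A x₀ := by
  by_contra! hlt
  have hdeg := hbb.add_one_le_deg ha hM x₀
  have hout := hbb.outdeg_le x₀
  unfold deg at hdeg
  obtain ⟨y₀, hy₀⟩ := exists_of_one_le_natCard_subtype (by omega : 1 ≤ indeg A x₀)
  have hy₀Y := (hbb.nbhd_subset_Y hx₀).2 y₀ hy₀
  have hx₀Y : ∀ y ∈ Y, A x₀ y := forall_of_card_le_natCard_subtype (hbb.nbhd_subset_Y hx₀).1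
    (by rw [hbb.2.1]; exact (by omega : a ≤ outdeg A x₀))
  have hX : ∀ x ∈ X, x ≠ x₀ → ∀ y ∈ Y, A x y ∧ A y x := by
    intro x hx hne
    have := hbb.three_mul_add_one_le_deg_add_deg hM hne (.inl ⟨hx, hx₀⟩)
    refine arcs_of_two_mul_card_le_deg (hbb.nbhd_subset_Y hx).1 (hbb.nbhd_subset_Y hx).2 ?_
    rw [hbb.2.1]
    unfold deg at this ⊢
    omega
  exact hnoham <| hasCycleOfLength_two_mul ha hbb hx₀ hy₀Y hy₀
    (fun y hy _ => hx₀Y y hy) (fun x hx hne => (hX x hx hne y₀ hy₀Y).1)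
    fun x hx hne y hy _ => hX x hx hne y hy

end LowDegree

section Matching

variable {A : V → V → Prop} {X Y : Finset V} {a : ℕ} {M : V → V}

theorem CompleteMatching.exists_mate (hbb : BalancedBipartite A X Y a)
    (hmatch : CompleteMatching A X Y M) {y : V} (hy : y ∈ Y) : ∃ x ∈ X, M x = y := by
  obtain ⟨x, hx, h⟩ := Finset.surj_on_of_inj_on_of_card_le (fun x _ => M x)
    (fun x hx => (hmatch.1 x hx).1) (fun _ _ h₁ h₂ h => hmatch.2 h₁ h₂ h)
    (by rw [hbb.1, hbb.2.1]) y hy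
  exact ⟨x, hx, h.symm⟩

/-- `c` is a path from `s` to `t` in the digraph on `X` obtained by contracting the arcs of
`M`, which has an arc `r → t` whenever `D` has the arc `M r → t`. -/
def IsMatePath (A : V → V → Prop) (X : Finset V) (M : V → V) (c : List V) (s t : V) : Prop :=
  c.Nodup ∧ (∀ x ∈ c, x ∈ X) ∧ c.IsChain (fun x y => A (M x) y) ∧
    c.head? = some s ∧ c.getLast? = some t

/-- Every proper nonempty subset of `X` has an arc leaving it in the contracted digraph.
If not, for the sets `S` and `T` of vertices of `X` with and without `P`, the out-neighbours
of `M(S)` lie in `S` and the in-neighbours of `T` in `M(T)`. By the bounds above both sets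
have two elements, and (M) applied to two vertices of `M(S)` and to two of `T` gives
`6a + 2 ≤ 2(|S| + a) + 2(a + |T|) = 6a`. -/
theorem exists_arc_from_mate_across (ha : 2 ≤ a) (hbb : BalancedBipartite A X Y a)
    (hM : CondM A a) (hmatch : CompleteMatching A X Y M)
    (hnoham : ¬ HasCycleOfLength A (2 * a)) {P : V → Prop} {r₀ t₀ : V}
    (hr₀ : r₀ ∈ X) (ht₀ : t₀ ∈ X) (hP : P r₀) (hnP : ¬ P t₀) :
    ∃ r ∈ X, P r ∧ ∃ t ∈ X, ¬ P t ∧ A (M r) t := by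
  classical
  by_contra! h
  set S := X.filter P
  set T := X.filter (¬ P ·)
  have hcard : S.card + T.card = a := by rw [Finset.card_filter_add_card_filter_not, hbb.1]
  have hMY : ∀ r ∈ X, M r ∈ Y := fun r hr => (hmatch.1 r hr).1
  have hout : ∀ r ∈ S, ∀ w, A (M r) w → w ∈ S := by
    intro r hr w hw
    obtain ⟨hrX, hrP⟩ := Finset.mem_filter.1 hr
    have hwX := (hbb.nbhd_subset_X (hMY r hrX)).1 w hw
    by_contra hwS
    exact h r hrX hrP w hwX (fun hwP => hwS (Finset.mem_filter.2 ⟨hwX, hwP⟩)) hw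
  have hin : ∀ t ∈ T, ∀ w, A w t → w ∈ T.image M := by
    intro t ht w hw
    obtain ⟨htX, htP⟩ := Finset.mem_filter.1 ht
    obtain ⟨r, hrX, rfl⟩ := hmatch.exists_mate hbb ((hbb.nbhd_subset_Y htX).2 w hw)
    exact Finset.mem_image_of_mem M
      (Finset.mem_filter.2 ⟨hrX, fun hrP => h r hrX hrP t htX htP hw⟩)
  have hindeg : ∀ t ∈ T, indeg A t ≤ T.card := fun t ht =>
    (natCard_subtype_le_card (hin t ht)).trans Finset.card_image_le
  have hdegS : ∀ r ∈ S, deg A (M r) ≤ S.card + a := fun r hr =>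
    add_le_add (natCard_subtype_le_card (hout r hr)) (hbb.indeg_le _)
  have hdegT : ∀ t ∈ T, deg A t ≤ a + T.card := fun t ht =>
    add_le_add (hbb.outdeg_le t) (hindeg t ht)
  have hS : 1 < S.card := (two_le_outdeg_of_mem_Y ha hbb hM hnoham (hMY r₀ hr₀)).trans
    (natCard_subtype_le_card (hout r₀ (Finset.mem_filter.2 ⟨hr₀, hP⟩)))
  have hT : 1 < T.card := (two_le_indeg_of_mem_X ha hbb hM hnoham ht₀).trans
    (hindeg t₀ (Finset.mem_filter.2 ⟨ht₀, hnP⟩))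
  obtain ⟨r₁, hr₁, r₂, hr₂, hr⟩ := Finset.one_lt_card.1 hS
  obtain ⟨t₁, ht₁, t₂, ht₂, ht⟩ := Finset.one_lt_card.1 hT
  have hr₁X := (Finset.mem_filter.1 hr₁).1
  have hr₂X := (Finset.mem_filter.1 hr₂).1
  have := hbb.three_mul_add_one_le_deg_add_deg hM (fun h => hr (hmatch.2 hr₁X hr₂X h))
    (.inr ⟨hMY r₁ hr₁X, hMY r₂ hr₂X⟩)
  have := hbb.three_mul_add_one_le_deg_add_deg hM ht
    (.inl ⟨(Finset.mem_filter.1 ht₁).1, (Finset.mem_filter.1 ht₂).1⟩)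
  have := hdegS r₁ hr₁
  have := hdegS r₂ hr₂
  have := hdegT t₁ ht₁
  have := hdegT t₂ ht₂
  omega

theorem exists_isMatePath (ha : 2 ≤ a) (hbb : BalancedBipartite A X Y a) (hM : CondM A a)
    (hmatch : CompleteMatching A X Y M) (hnoham : ¬ HasCycleOfLength A (2 * a))
    {s t : V} (hs : s ∈ X) (ht : t ∈ X) :
    ∃ c, IsMatePath A X M c s t := by
  by_contra hnt
  obtain ⟨r, hr, ⟨c, hnd, hcX, hchain, hhead, hlast⟩, t', ht', hnt', harc⟩ :=
    exists_arc_from_mate_across ha hbb hM hmatch hnoham hs ht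
      (P := fun r => ∃ c, IsMatePath A X M c s r)
      ⟨[s], List.nodup_singleton s, by simpa using hs, List.isChain_singleton s, rfl, rfl⟩ hnt
  apply hnt'
  by_cases ht'c : t' ∈ c
  · obtain ⟨l₁, l₂, rfl⟩ := List.append_of_mem ht'c
    refine ⟨l₁ ++ [t'], hnd.sublist (by simp), fun x hx => hcX x (by simp at hx ⊢; tauto),
      hchain.prefix ⟨l₂, by simp⟩, by cases l₁ <;> simp_all, by simp⟩
  · refine ⟨c ++ [t'], ?_, fun x hx => ?_,
      hchain.append (List.isChain_singleton t') (by simp_all), ?_, by simp⟩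
    · simpa [List.nodup_append, hnd] using fun x (hx : x ∈ c) (hxt : x = t') => ht'c (hxt ▸ hx)
    · rcases List.mem_append.1 hx with hx | hx
      exacts [hcX x hx, List.mem_singleton.1 hx ▸ ht']
    · simp [List.head?_append, hhead]

theorem exists_isChain_mate_cons_append (ha : 2 ≤ a) (hbb : BalancedBipartite A X Y a)
    (hM : CondM A a) (hmatch : CompleteMatching A X Y M)
    (hnoham : ¬ HasCycleOfLength A (2 * a)) {x₀ v : V} (hx₀ : x₀ ∈ X) (hv : v ∈ X) :
    ∃ m, (x₀ :: m).Nodup ∧ (∀ x ∈ x₀ :: m, x ∈ X) ∧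
      (x₀ :: m ++ [v]).IsChain (fun x y => A (M x) y) ∧ v ∉ m := by
  by_cases hvx : v = x₀
  · subst hvx
    obtain ⟨w, hw⟩ := exists_of_one_le_natCard_subtype
      ((two_le_indeg_of_mem_X ha hbb hM hnoham hv).trans' one_le_two : 1 ≤ indeg A v)
    obtain ⟨t, ht, rfl⟩ := hmatch.exists_mate hbb ((hbb.nbhd_subset_Y hv).2 w hw)
    obtain ⟨c, hnd, hcX, hchain, hhead, hlast⟩ :=
      exists_isMatePath ha hbb hM hmatch hnoham hv ht
    obtain ⟨m, rfl⟩ := List.head?_eq_some_iff.1 hhead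
    exact ⟨m, hnd, hcX, hchain.append (List.isChain_singleton v) (by simp_all),
      (List.nodup_cons.1 hnd).1⟩
  · obtain ⟨c, hnd, hcX, hchain, hhead, hlast⟩ :=
      exists_isMatePath ha hbb hM hmatch hnoham hx₀ hv
    obtain ⟨l, rfl⟩ := List.getLast?_eq_some_iff.1 hlast
    obtain ⟨m, rfl⟩ : ∃ m, l = x₀ :: m := by
      cases l with
      | nil => exact absurd (by simpa using hhead) hvx
      | cons y m => exact ⟨m, by simpa using hhead⟩
    refine ⟨m, hnd.sublist (by simp), fun x hx => hcX x (by simp at hx ⊢; tauto), hchain, ?_⟩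
    simp [List.nodup_append] at hnd
    tauto

end Matching

section CompatiblePaths

variable {A : V → V → Prop} {X Y : Finset V} {a : ℕ} {M : V → V}

theorem CompleteMatching.nodup_withMates (hbb : BalancedBipartite A X Y a)
    (hmatch : CompleteMatching A X Y M) {c : List V} (hnd : c.Nodup) (hc : ∀ x ∈ c, x ∈ X) :
    (withMates M c).Nodup :=
  BipDigraph.nodup_withMates hnd hc hmatch.2 fun x hx => hbb.not_mem_X (hmatch.1 x hx).1

theorem alt_withMates (hbb : BalancedBipartite A X Y a) (hmatch : CompleteMatching A X Y M)
    {c : List V} (hc : ∀ x ∈ c, x ∈ X) (hchain : c.IsChain (fun x y => A (M x) y)) :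
    Alt (InM X M) (NotM A X M) (withMates M c) := by
  induction c with
  | nil => trivial
  | cons x c ih =>
    have hx := hc x (by simp)
    have ih := ih (fun y hy => hc y (by simp [hy])) hchain.tail
    cases c with
    | nil => exact ⟨⟨hx, rfl⟩, trivial⟩
    | cons y c =>
      exact ⟨⟨hx, rfl⟩, ⟨(List.isChain_cons_cons.1 hchain).1,
        fun h => hbb.not_mem_X (hmatch.1 x hx).1 h.1⟩, ih⟩

theorem isCompatPath_of_infix_withMates (hbb : BalancedBipartite A X Y a)
    (hmatch : CompleteMatching A X Y M) {c p : List V} (hc : ∀ x ∈ c, x ∈ X)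
    (hchain : c.IsChain (fun x y => A (M x) y)) (hp : p <:+: withMates M c) (hne : p ≠ [])
    (hnd : p.Nodup) : IsCompatPath A X M p :=
  ⟨hne, hnd, (isChain_withMates (fun x hx => (hmatch.1 x (hc x hx)).2) hchain).infix hp,
    (alt_withMates hbb hmatch hc hchain).infix hp⟩

theorem exists_compatPath_to_mate (ha : 2 ≤ a) (hbb : BalancedBipartite A X Y a)
    (hM : CondM A a) (hmatch : CompleteMatching A X Y M)
    (hnoham : ¬ HasCycleOfLength A (2 * a)) {x₀ t u : V} (hx₀ : x₀ ∈ X) (ht : t ∈ X)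
    (hu : u = x₀ ∨ u = M x₀) : ∃ p, IsCompatPathFromTo A X M p u (M t) := by
  obtain ⟨c, hnd, hcX, hchain, hhead, hlast⟩ := exists_isMatePath ha hbb hM hmatch hnoham hx₀ ht
  have hW := hmatch.nodup_withMates hbb hnd hcX
  obtain ⟨c, rfl⟩ := List.head?_eq_some_iff.1 hhead
  have hlastW : (withMates M (x₀ :: c)).getLast? = some (M t) := by
    rw [getLast?_withMates, hlast]
    rfl
  rcases hu with rfl | rfl
  · exact ⟨_, isCompatPath_of_infix_withMates hbb hmatch hcX hchain (List.infix_refl _)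
      (by simp) hW, rfl, hlastW⟩
  · refine ⟨M x₀ :: withMates M c, isCompatPath_of_infix_withMates hbb hmatch hcX hchain
      ⟨[x₀], [], by simp⟩ (by simp) (List.nodup_cons.1 hW).2, rfl, ?_⟩
    rwa [withMates_cons, List.getLast?_cons_cons] at hlastW

theorem exists_compatPath_to_mem_X (ha : 2 ≤ a) (hbb : BalancedBipartite A X Y a)
    (hM : CondM A a) (hmatch : CompleteMatching A X Y M)
    (hnoham : ¬ HasCycleOfLength A (2 * a)) {x₀ u v : V} (hx₀ : x₀ ∈ X) (hv : v ∈ X)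
    (hu : u = x₀ ∧ v ≠ x₀ ∨ u = M x₀) : ∃ p, IsCompatPathFromTo A X M p u v := by
  obtain ⟨m, hnd, hmX, hchain, hvm⟩ :=
    exists_isChain_mate_cons_append ha hbb hM hmatch hnoham hx₀ hv
  have hcX : ∀ x ∈ x₀ :: m ++ [v], x ∈ X := by
    intro x hx
    rcases List.mem_append.1 hx with hx | hx
    exacts [hmX x hx, List.mem_singleton.1 hx ▸ hv]
  have hW := hmatch.nodup_withMates hbb hnd hmX
  have hMX : ∀ x ∈ X, M x ∉ X := fun x hx => hbb.not_mem_X (hmatch.1 x hx).1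
  have hvW : v ∉ M x₀ :: withMates M m := by
    simp only [List.mem_cons, mem_withMates, not_or, not_exists, not_and]
    exact ⟨fun h => hMX x₀ hx₀ (h ▸ hv), hvm,
      fun x hx h => hMX x (hmX x (by simp [hx])) (h ▸ hv)⟩
  have hq : (M x₀ :: withMates M m ++ [v]).Nodup := by
    simpa using (List.nodup_cons.1 hW).2.concat hvW
  rcases hu with ⟨rfl, hne⟩ | rfl
  · refine ⟨u :: (M u :: withMates M m ++ [v]), isCompatPath_of_infix_withMates hbb hmatch hcX
      hchain ⟨[], [M v], by simp⟩ (by simp) (List.nodup_cons.2 ⟨?_, hq⟩), rfl, ?_⟩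
    · intro h
      rcases List.mem_append.1 h with h | h
      exacts [(List.nodup_cons.1 hW).1 h, hne (List.mem_singleton.1 h).symm]
    · rw [← List.cons_append, List.getLast?_concat]
  · exact ⟨M x₀ :: withMates M m ++ [v], isCompatPath_of_infix_withMates hbb hmatch hcX hchain
      ⟨[x₀], [M v], by simp⟩ (by simp) hq, rfl, List.getLast?_concat⟩

end CompatiblePaths

theorem stmt4_general {V : Type} (A : V → V → Prop)
    (X Y : Finset V) (a : ℕ) (ha : 2 ≤ a)
    (hbb : BalancedBipartite A X Y a) (hM : CondM A a)
    (M : V → V) (hmatch : CompleteMatching A X Y M)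
    (hnoham : ¬ HasCycleOfLength A (2 * a)) :
    ∀ u v : V, u ≠ v → ∃ p : List V, IsCompatPathFromTo A X M p u v := by
  intro u v huv
  obtain ⟨x₀, hx₀, hu⟩ : ∃ x₀ ∈ X, u = x₀ ∨ u = M x₀ := by
    rcases hbb.2.2.2.1 u with hu | hu
    · exact ⟨u, hu, .inl rfl⟩
    · obtain ⟨x₀, hx₀, rfl⟩ := hmatch.exists_mate hbb hu
      exact ⟨x₀, hx₀, .inr rfl⟩
  rcases hbb.2.2.2.1 v with hv | hv
  · exact exists_compatPath_to_mem_X ha hbb hM hmatch hnoham hx₀ hv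
      (hu.imp (fun h => ⟨h, h ▸ huv.symm⟩) id)
  · obtain ⟨t, ht, rfl⟩ := hmatch.exists_mate hbb hv
    exact exists_compatPath_to_mate ha hbb hM hmatch hnoham hx₀ ht hu

/-- under condition (M), if `D` has a complete matching `M` from `X` to `Y`
and no oriented cycle of length `2a`, then any two distinct vertices are joined by an
`M`-compatible oriented path. -/
theorem stmt4 {V : Type} [Fintype V] [DecidableEq V] (A : V → V → Prop)
    (X Y : Finset V) (a : ℕ) (ha : 2 ≤ a)
    (hbb : BalancedBipartite A X Y a) (hM : CondM A a)
    (M : V → V) (hmatch : CompleteMatching A X Y M)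
    (hnoham : ¬ HasCycleOfLength A (2 * a)) :
    ∀ u v : V, u ≠ v → ∃ p : List V, IsCompatPathFromTo A X M p u v :=
  stmt4_general A X Y a ha hbb hM M hmatch hnoham

end BipDigraph
end

section
/- Let D' be a balanced bipartite digraph with colour classes X' and Y' of cardinality a' = 2, containing a complete matching M' from X' to Y', and satisfying: d(x') + d(y') + d(x'') + d(y'') ≥ 6a' + 2 for all pairwise distinct x', x'' ∈ X', y', y'' ∈ Y' such that D' contains M'-compatible paths from x' to y' and from x'' to y''. Then D' contains a cycle of length 4 compatible with some complete matching from X' to Y'. -/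
namespace BipDigraph

variable {V : Type}

/-! With `X = {x₁, x₂}` and `yᵢ = M xᵢ`, the two matching arcs are compatible paths, so
condition (A) bounds the degree sum of all four vertices by `14` from below. That sum counts
every arc twice, so at least `7` of the `8` possible arcs between the classes are present.
If `y₁ → x₂` and `y₂ → x₁` are both present, `x₁ y₁ x₂ y₂` is an `M`-compatible 4-cycle;
otherwise the one missing arc is among these two, and `x₁ y₂ x₂ y₁` is a 4-cycle compatible
with the swapped matching `x₁ ↦ y₂, x₂ ↦ y₁`. -/

lemma mem_of_card_le_succ_of_notMem {α : Type*} [DecidableEq α] {S B : Finset α}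
    (hSB : S ⊆ B) (hcard : B.card ≤ S.card + 1) {p q : α} (hp : p ∈ B) (hpS : p ∉ S)
    (hq : q ∈ B) (hqp : q ≠ p) : q ∈ S := by
  by_contra hqS
  have hsub : S ⊆ (B.erase p).erase q := fun v hv =>
    Finset.mem_erase.mpr ⟨by rintro rfl; exact hqS hv,
      Finset.mem_erase.mpr ⟨by rintro rfl; exact hpS hv, hSB hv⟩⟩
  have := Finset.card_le_card hsub
  rw [Finset.card_erase_of_mem (Finset.mem_erase.mpr ⟨hqp, hq⟩),
    Finset.card_erase_of_mem hp] at this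
  have : 2 ≤ B.card := Finset.one_lt_card.mpr ⟨p, hp, q, hq, hqp.symm⟩
  omega

section Handshake

variable [Fintype V] (A : V → V → Prop) [DecidableRel A]

def arcs : Finset (V × V) := Finset.univ.filter fun p => A p.1 p.2

variable {A}

@[simp]
lemma mem_arcs {p : V × V} : p ∈ arcs A ↔ A p.1 p.2 := by
  simp [arcs]

variable (A)

lemma outdeg_eq_card_filter (v : V) : outdeg A v = (Finset.univ.filter (A v)).card := by
  rw [outdeg, Nat.card_eq_fintype_card, Fintype.card_subtype]

lemma indeg_eq_card_filter (v : V) :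
    indeg A v = (Finset.univ.filter fun w => A w v).card := by
  rw [indeg, Nat.card_eq_fintype_card, Fintype.card_subtype]

lemma sum_outdeg_eq_card_arcs : ∑ v, outdeg A v = (arcs A).card := by
  simp only [outdeg_eq_card_filter, arcs, Finset.card_filter, Fintype.sum_prod_type]

lemma sum_indeg_eq_card_arcs : ∑ v, indeg A v = (arcs A).card := by
  simp only [indeg_eq_card_filter, arcs, Finset.card_filter, Fintype.sum_prod_type]
  exact Finset.sum_comm

lemma sum_deg_eq_two_mul_card_arcs : ∑ v, deg A v = 2 * (arcs A).card := by
  simp only [deg, Finset.sum_add_distrib, sum_outdeg_eq_card_arcs, sum_indeg_eq_card_arcs]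
  ring

end Handshake

namespace BalancedBipartite

variable {A : V → V → Prop} {X Y : Finset V} {a : ℕ}

lemma arcs_subset [Fintype V] [DecidableEq V] [DecidableRel A]
    (h : BalancedBipartite A X Y a) : arcs A ⊆ X ×ˢ Y ∪ Y ×ˢ X := by
  intro p hp
  simpa using h.2.2.2.2 p.1 p.2 (mem_arcs.mp hp)

lemma card_crossPairs [DecidableEq V] (h : BalancedBipartite A X Y a) :
    (X ×ˢ Y ∪ Y ×ˢ X).card = 2 * a * a := by
  obtain ⟨hX, hY, hXY, -⟩ := h
  rw [Finset.card_union_of_disjoint (Finset.disjoint_product.mpr (Or.inl hXY)),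
    Finset.card_product, Finset.card_product, hX, hY]
  ring

lemma two_mul_card_arcs [Fintype V] [DecidableRel A] (h : BalancedBipartite A X Y a) :
    2 * (arcs A).card = ∑ x ∈ X, deg A x + ∑ y ∈ Y, deg A y := by
  classical
  obtain ⟨-, -, hXY, hcover, -⟩ := h
  have huniv : (Finset.univ : Finset V) = X ∪ Y :=
    Finset.eq_univ_of_forall (fun v => Finset.mem_union.mpr (hcover v)) |>.symm
  rw [← sum_deg_eq_two_mul_card_arcs, huniv, Finset.sum_union hXY]

end BalancedBipartite

namespace CompleteMatching

variable {A : V → V → Prop} {X Y : Finset V} {M : V → V}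

lemma image_eq [DecidableEq V] (hM : CompleteMatching A X Y M) (hcard : Y.card ≤ X.card) :
    X.image M = Y :=
  Finset.eq_of_subset_of_card_le (fun _ hy => by
      obtain ⟨x, hx, rfl⟩ := Finset.mem_image.mp hy
      exact (hM.1 x hx).1)
    (by rwa [Finset.card_image_of_injOn hM.2])

lemma comp_swap [DecidableEq V] (hM : CompleteMatching A X Y M) {x₁ x₂ : V}
    (hx₁ : x₁ ∈ X) (hx₂ : x₂ ∈ X) (h₁ : A x₁ (M x₂)) (h₂ : A x₂ (M x₁)) :
    CompleteMatching A X Y (M ∘ Equiv.swap x₁ x₂) := by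
  have hmaps : Set.MapsTo (Equiv.swap x₁ x₂) X X := fun x hx => by
    rcases eq_or_ne x x₁ with rfl | h1
    · simpa using hx₂
    rcases eq_or_ne x x₂ with rfl | h2
    · simpa using hx₁
    simpa [Equiv.swap_apply_of_ne_of_ne h1 h2] using hx
  refine ⟨fun x hx => ⟨(hM.1 _ (hmaps hx)).1, ?_⟩,
    hM.2.comp (Equiv.injective _).injOn hmaps⟩
  rcases eq_or_ne x x₁ with rfl | h1
  · simpa using h₁
  rcases eq_or_ne x x₂ with rfl | h2
  · simpa using h₂
  simpa [Equiv.swap_apply_of_ne_of_ne h1 h2] using (hM.1 x hx).2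

lemma isCompatPathFromTo_pair {x : V} (hM : CompleteMatching A X Y M) (hXY : Disjoint X Y)
    (hx : x ∈ X) : IsCompatPathFromTo A X M [x, M x] x (M x) := by
  have hne : x ≠ M x := fun h => Finset.disjoint_left.mp hXY hx (h ▸ (hM.1 x hx).1)
  exact ⟨⟨by simp, by simp [hne], List.isChain_pair.mpr (hM.1 x hx).2, Or.inl ⟨⟨hx, rfl⟩, trivial⟩⟩,
    rfl, rfl⟩

lemma isCompatCycle_square (hM : CompleteMatching A X Y M) (hXY : Disjoint X Y)
    {x₁ x₂ : V} (hx₁ : x₁ ∈ X) (hx₂ : x₂ ∈ X) (hx : x₁ ≠ x₂)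
    (h₁₂ : A (M x₁) x₂) (h₂₁ : A (M x₂) x₁) :
    IsCompatCycle A X M [x₁, M x₁, x₂, M x₂] := by
  have hy₁ := hM.1 x₁ hx₁
  have hy₂ := hM.1 x₂ hx₂
  have hnX : ∀ y ∈ Y, y ∉ X := fun y hy hyX => Finset.disjoint_left.mp hXY hyX hy
  have hne : ∀ x ∈ X, ∀ y ∈ Y, x ≠ y := fun x hx y hy h => hnX y hy (h ▸ hx)
  have hy : M x₁ ≠ M x₂ := fun h => hx (hM.2 hx₁ hx₂ h)
  refine ⟨by simp, ?_, x₁, rfl, ?_, Or.inl ?_⟩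
  · simp [hx, hy, hne x₁ hx₁ _ hy₁.1, hne x₁ hx₁ _ hy₂.1, (hne x₂ hx₂ _ hy₁.1).symm,
      hne x₂ hx₂ _ hy₂.1]
  · exact (by simp [hy₁.2, hy₂.2, h₁₂, h₂₁] : List.IsChain A [x₁, M x₁, x₂, M x₂, x₁])
  · exact ⟨⟨hx₁, rfl⟩, ⟨h₁₂, fun h => hnX _ hy₁.1 h.1⟩, ⟨hx₂, rfl⟩,
      ⟨h₂₁, fun h => hnX _ hy₂.1 h.1⟩, trivial⟩

lemma exists_isCompatCycle_swap [DecidableEq V] (hM : CompleteMatching A X Y M)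
    (hXY : Disjoint X Y) {x₁ x₂ : V} (hx₁ : x₁ ∈ X) (hx₂ : x₂ ∈ X) (hx : x₁ ≠ x₂)
    (h₁ : A x₁ (M x₂)) (h₂ : A x₂ (M x₁)) (h₁₁ : A (M x₁) x₁) (h₂₂ : A (M x₂) x₂) :
    ∃ M' : V → V, CompleteMatching A X Y M' ∧ IsCompatCycle A X M' [x₁, M x₂, x₂, M x₁] := by
  have hswap := hM.comp_swap hx₁ hx₂ h₁ h₂
  refine ⟨_, hswap, ?_⟩
  simpa using hswap.isCompatCycle_square hXY hx₁ hx₂ hx (by simpa using h₂₂) (by simpa using h₁₁)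

end CompleteMatching

lemma CondA.card_crossPairs_le_card_arcs_add_one [Fintype V] [DecidableEq V]
    {A : V → V → Prop} [DecidableRel A] {X Y : Finset V} {M : V → V}
    (hA : CondA A X Y M 2) (hbb : BalancedBipartite A X Y 2) (hM : CompleteMatching A X Y M)
    {x₁ x₂ : V} (hx : x₁ ≠ x₂) (hX : X = {x₁, x₂}) (hY : Y = {M x₁, M x₂}) :
    (X ×ˢ Y ∪ Y ×ˢ X).card ≤ (arcs A).card + 1 := by
  have hx₁ : x₁ ∈ X := by simp [hX]
  have hx₂ : x₂ ∈ X := by simp [hX]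
  have hy : M x₁ ≠ M x₂ := fun h => hx (hM.2 hx₁ hx₂ h)
  have hdeg : 14 ≤ deg A x₁ + deg A (M x₁) + deg A x₂ + deg A (M x₂) :=
    hA x₁ x₂ (M x₁) (M x₂) hx₁ hx₂ (hM.1 x₁ hx₁).1 (hM.1 x₂ hx₂).1 hx hy
      ⟨_, hM.isCompatPathFromTo_pair hbb.2.2.1 hx₁⟩ ⟨_, hM.isCompatPathFromTo_pair hbb.2.2.1 hx₂⟩
  have := hbb.two_mul_card_arcs
  rw [hX, hY, Finset.sum_pair hx, Finset.sum_pair hy] at this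
  rw [hbb.card_crossPairs]
  omega

lemma BalancedBipartite.exists_swap_isCompatCycle_of_not_arc [Fintype V] [DecidableEq V]
    {A : V → V → Prop} [DecidableRel A] {X Y : Finset V} {a : ℕ} {M : V → V}
    (hbb : BalancedBipartite A X Y a) (hM : CompleteMatching A X Y M)
    (hcard : (X ×ˢ Y ∪ Y ×ˢ X).card ≤ (arcs A).card + 1)
    {x₁ x₂ : V} (hx₁ : x₁ ∈ X) (hx₂ : x₂ ∈ X) (hx : x₁ ≠ x₂) (hmiss : ¬ A (M x₁) x₂) :
    ∃ M' : V → V, CompleteMatching A X Y M' ∧ IsCompatCycle A X M' [x₁, M x₂, x₂, M x₁] := by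
  have hy₁ := (hM.1 x₁ hx₁).1
  have hy₂ := (hM.1 x₂ hx₂).1
  have hy : M x₁ ≠ M x₂ := fun h => hx (hM.2 hx₁ hx₂ h)
  have hne : ∀ x ∈ X, ∀ y ∈ Y, x ≠ y := fun x hx y hy h =>
    Finset.disjoint_left.mp hbb.2.2.1 hx (h ▸ hy)
  have hall : ∀ q ∈ X ×ˢ Y ∪ Y ×ˢ X, q ≠ (M x₁, x₂) → A q.1 q.2 := fun q hq hqp =>
    mem_arcs.mp (mem_of_card_le_succ_of_notMem hbb.arcs_subset hcard
      (by simp [hx₂, hy₁]) (by simpa using hmiss) hq hqp)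
  have hforth : ∀ x ∈ X, ∀ y ∈ Y, A x y := fun x hx y hy =>
    hall (x, y) (by simp [hx, hy]) (by simp [hne x hx _ hy₁])
  exact hM.exists_isCompatCycle_swap hbb.2.2.1 hx₁ hx₂ hx (hforth x₁ hx₁ _ hy₂)
    (hforth x₂ hx₂ _ hy₁) (hall (M x₁, x₁) (by simp [hx₁, hy₁]) (by simp [hx]))
    (hall (M x₂, x₂) (by simp [hx₂, hy₂]) (by simp [hy.symm]))

theorem stmt5_general {V : Type} [Fintype V] (A : V → V → Prop)
    (X Y : Finset V) (hbb : BalancedBipartite A X Y 2)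
    (M : V → V) (hmatch : CompleteMatching A X Y M)
    (hA : CondA A X Y M 2) :
    ∃ M' : V → V, CompleteMatching A X Y M' ∧
      ∃ p : List V, IsCompatCycle A X M' p ∧ p.length = 4 := by
  classical
  obtain ⟨x₁, x₂, hx, hX⟩ := Finset.card_eq_two.mp hbb.1
  have hx₁ : x₁ ∈ X := by simp [hX]
  have hx₂ : x₂ ∈ X := by simp [hX]
  have hY : Y = {M x₁, M x₂} := by
    rw [← hmatch.image_eq (by rw [hbb.1, hbb.2.1]), hX, Finset.image_insert,
      Finset.image_singleton]
  have hcard := hA.card_crossPairs_le_card_arcs_add_one hbb hmatch hx hX hY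
  by_cases h₁₂ : A (M x₁) x₂
  · by_cases h₂₁ : A (M x₂) x₁
    · exact ⟨M, hmatch, _, hmatch.isCompatCycle_square hbb.2.2.1 hx₁ hx₂ hx h₁₂ h₂₁, rfl⟩
    · obtain ⟨M', hM', hcycle⟩ :=
        hbb.exists_swap_isCompatCycle_of_not_arc hmatch hcard hx₂ hx₁ hx.symm h₂₁
      exact ⟨M', hM', _, hcycle, rfl⟩
  · obtain ⟨M', hM', hcycle⟩ :=
      hbb.exists_swap_isCompatCycle_of_not_arc hmatch hcard hx₁ hx₂ hx h₁₂
    exact ⟨M', hM', _, hcycle, rfl⟩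

/-- a balanced bipartite digraph with classes of cardinality `2`, possessing
a complete matching `M'` from `X'` to `Y'` and satisfying condition (A), contains a cycle
of length 4 compatible with some complete matching from `X'` to `Y'`. -/
theorem stmt5 {V : Type} [Fintype V] [DecidableEq V] (A : V → V → Prop)
    (X Y : Finset V) (hbb : BalancedBipartite A X Y 2)
    (M : V → V) (hmatch : CompleteMatching A X Y M)
    (hA : CondA A X Y M 2) :
    ∃ M' : V → V, CompleteMatching A X Y M' ∧
      ∃ p : List V, IsCompatCycle A X M' p ∧ p.length = 4 :=
  stmt5_general A X Y hbb M hmatch hA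

end BipDigraph
end

section
/- Let D be a balanced bipartite digraph with colour classes of cardinality a ≥ 2. If d(u) + d(v) ≥ 3a + 1 for every pair of distinct vertices u, v such that uv ∉ A(D) and vu ∉ A(D), then D contains a hamiltonian cycle (an oriented cycle of length 2a). -/
/-!
Condition (M), applied to pairs of vertices of the same colour class, implies Hall's condition
in both directions, so `D` has a cycle factor: a permutation `π` such that `v → π v` is an arc
for every `v`. Fix `x₀ ∈ X` and take a cycle factor whose cycle through `x₀` is longest; let `S`
be the vertex set of that cycle. If some `u ∈ S` and `u' ∉ S` had arcs `u → π u'` and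
`u' → π u`, then `π * swap u u'` would be a cycle factor with a longer cycle through `x₀`.

With `m = |S ∩ X| = |S ∩ Y|`, the absence of such pairs bounds the arcs between `S` and its
complement, giving `∑_{v ∈ S} d(v) ≤ 2m(a + m)`, while (M) applied to pairs inside `S ∩ X` and
inside `S ∩ Y` gives `∑_{v ∈ S} d(v) ≥ m(3a + 1)` as soon as `m ≥ 2`; hence `2m > a`. If `m = 1`,
then `S` is a 2-cycle `{x', y'}` with `d(x') + d(y') ≤ 2a + 2`, and (M) forces every other
vertex to have the full degree `2a`, which produces such a pair. The complement of `S` satisfies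
the same hypotheses, so it is empty and the cycle through `x₀` is hamiltonian.
-/

open Finset Equiv Equiv.Perm

theorem List.isChain_iterate {α : Type*} {R : α → α → Prop} {f : α → α}
    (hf : ∀ b, R b (f b)) (b : α) (n : ℕ) : (List.iterate f b n).IsChain R := by
  rw [List.isChain_iff_getElem]
  intro i hi
  simp only [List.getElem_iterate, Function.iterate_succ_apply']
  exact hf _

theorem Finset.card_mul_le_two_mul_sum {ι : Type*} [DecidableEq ι] {Q : Finset ι} {d : ι → ℕ}
    {c : ℕ} (hQ : 2 ≤ #Q) (h : ∀ u ∈ Q, ∀ v ∈ Q, u ≠ v → c ≤ d u + d v) :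
    #Q * c ≤ 2 * ∑ v ∈ Q, d v := by
  obtain ⟨u, hu, hmin⟩ := exists_min_image Q d (card_pos.1 (by omega))
  have hpair : #(Q.erase u) * c ≤ #(Q.erase u) * d u + ∑ v ∈ Q.erase u, d v := by
    rw [← smul_eq_mul, ← sum_const, ← smul_eq_mul, ← sum_const, ← sum_add_distrib]
    exact sum_le_sum fun v hv => h u hu v (mem_of_mem_erase hv) (ne_of_mem_erase hv).symm
  have hmin' : #(Q.erase u) * d u ≤ ∑ v ∈ Q.erase u, d v := by
    rw [← smul_eq_mul, ← sum_const]
    exact sum_le_sum fun v hv => hmin v (mem_of_mem_erase hv)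
  rw [← add_sum_erase Q d hu, ← card_erase_add_one hu]
  have hk : 1 ≤ #(Q.erase u) := by rw [card_erase_of_mem hu]; omega
  nlinarith

namespace Equiv.Perm

variable {α : Type*} {π : Perm α}

theorem SameCycle.induction_on_apply [Finite α] {p : α → Prop} {x y : α} (h : π.SameCycle x y)
    (hx : p x) (step : ∀ z, π.SameCycle x z → p z → p (π z)) : p y := by
  obtain ⟨n, rfl⟩ := h.exists_nat_pow_eq
  clear h
  induction n with
  | zero => exact hx
  | succ n ih =>
    rw [pow_succ', Perm.mul_apply]
    exact step _ (sameCycle_pow_right.2 (SameCycle.refl _ _)) ih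

variable [DecidableEq α] {u u' : α}

theorem sameCycle_mul_swap [Finite α] (h : ¬ π.SameCycle u u') :
    (π * swap u u').SameCycle u u' := by
  by_contra h'
  refine h' ((sameCycle_apply_left.2 (SameCycle.refl π u')).induction_on_apply
    (p := (π * swap u u').SameCycle u) ?_ fun z hz hpz => ?_)
  · simpa using sameCycle_apply_right.2 (SameCycle.refl (π * swap u u') u)
  · have hzu : z ≠ u := by
      rintro rfl
      exact h (sameCycle_apply_left.1 hz).symm
    have hzu' : z ≠ u' := by
      rintro rfl
      exact h' hpz
    simpa [swap_apply_of_ne_of_ne hzu hzu'] using sameCycle_apply_right.2 hpz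

theorem SameCycle.mul_swap [Finite α] (h : ¬ π.SameCycle u u') {v w : α}
    (hvw : π.SameCycle v w) : (π * swap u u').SameCycle v w := by
  have step : ∀ z, (π * swap u u').SameCycle z (π z) := by
    intro z
    have huu' := sameCycle_mul_swap h
    by_cases hzu : z = u
    · subst hzu
      simpa using sameCycle_apply_right.2 huu'
    by_cases hzu' : z = u'
    · subst hzu'
      simpa using sameCycle_apply_right.2 huu'.symm
    · have hπz : π z = (π * swap u u') z := by simp [swap_apply_of_ne_of_ne hzu hzu']
      rw [hπz]
      exact sameCycle_apply_right.2 (SameCycle.refl _ z)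
  exact hvw.induction_on_apply (SameCycle.refl _ v) fun z _ hz => hz.trans (step z)

theorem support_cycleOf_ssubset_mul_swap [Fintype α] {x : α}
    (hu : u ∈ (π.cycleOf x).support) (hu' : u' ∉ (π.cycleOf x).support)
    (hx : (π * swap u u') x ≠ x) :
    (π.cycleOf x).support ⊂ ((π * swap u u').cycleOf x).support := by
  rw [mem_support_cycleOf_iff] at hu hu'
  have hxu' : ¬ π.SameCycle x u' := fun h => hu' ⟨h, hu.2⟩
  have huu' : ¬ π.SameCycle u u' := fun h => hxu' (hu.1.trans h)
  rw [Finset.ssubset_iff_of_subset]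
  · exact ⟨u', (mem_support_cycleOf_iff' hx).2 ((hu.1.mul_swap huu').trans
      (sameCycle_mul_swap huu')), fun h => hxu' (mem_support_cycleOf_iff.1 h).1⟩
  · intro w hw
    exact (mem_support_cycleOf_iff' hx).2 ((mem_support_cycleOf_iff.1 hw).1.mul_swap huu')

theorem toList_append_singleton [Fintype α] (x : α) :
    π.toList x ++ [x] = List.iterate π x (#(π.cycleOf x).support + 1) := by
  rw [List.iterate_add, Equiv.Perm.toList, iterate_eq_pow,
    ← pow_mod_card_support_cycleOf_self_apply, Nat.mod_self, pow_zero]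
  rfl

end Equiv.Perm

namespace BipDigraph

open scoped Classical

variable {V : Type} {A : V → V → Prop} {X Y : Finset V} {a : ℕ}

def IsCycleFactor (A : V → V → Prop) (π : Perm V) : Prop := ∀ v, A v (π v)

/-- For a cycle factor `π`, arcs `u → π u'` and `u' → π u` make `π * swap u u'` a cycle factor
in which the cycles through `u` and `u'` are joined; no such pair straddles `S`. -/
def NoMergeAcross (A : V → V → Prop) (π : Perm V) (S : Finset V) : Prop :=
  ∀ u ∈ S, ∀ u' ∉ S, ¬ (A u (π u') ∧ A u' (π u))

namespace BalancedBipartite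

variable {π : Perm V} {u v : V}

theorem card_left (h : BalancedBipartite A X Y a) : #X = a := h.1

theorem card_right (h : BalancedBipartite A X Y a) : #Y = a := h.2.1

theorem disjoint (h : BalancedBipartite A X Y a) : Disjoint X Y := h.2.2.1

theorem mem_or_mem (h : BalancedBipartite A X Y a) (v : V) : v ∈ X ∨ v ∈ Y := h.2.2.2.1 v

theorem symm (h : BalancedBipartite A X Y a) : BalancedBipartite A Y X a :=
  ⟨h.card_right, h.card_left, h.disjoint.symm, fun v => (h.mem_or_mem v).symm,
    fun u v huv => (h.2.2.2.2 u v huv).symm⟩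

theorem mem_right_iff (h : BalancedBipartite A X Y a) : v ∈ Y ↔ v ∉ X :=
  ⟨fun hY hX => Finset.disjoint_left.1 h.disjoint hX hY, (h.mem_or_mem v).resolve_left⟩

theorem target_mem_right (h : BalancedBipartite A X Y a) (hu : u ∈ X) (huv : A u v) : v ∈ Y :=
  (h.2.2.2.2 u v huv).elim And.right fun h' => absurd hu (h.mem_right_iff.1 h'.1)

theorem source_mem_right (h : BalancedBipartite A X Y a) (hv : v ∈ X) (huv : A u v) : u ∈ Y :=
  (h.2.2.2.2 u v huv).elim (fun h' => absurd hv (h.mem_right_iff.1 h'.2)) And.left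

theorem not_arc (h : BalancedBipartite A X Y a) (hu : u ∈ X) (hv : v ∈ X) : ¬ A u v :=
  fun huv => h.mem_right_iff.1 (h.target_mem_right hu huv) hv

theorem irrefl (h : BalancedBipartite A X Y a) (v : V) : ¬ A v v :=
  (h.mem_or_mem v).elim (fun hv => h.not_arc hv hv) fun hv => h.symm.not_arc hv hv

theorem add_deg_of_condM (h : BalancedBipartite A X Y a) (hM : CondM A a) (hu : u ∈ X)
    (hv : v ∈ X) (huv : u ≠ v) : 3 * a + 1 ≤ deg A u + deg A v :=
  hM u v huv (h.not_arc hu hv) (h.not_arc hv hu)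

theorem apply_mem_right (h : BalancedBipartite A X Y a) (hπ : IsCycleFactor A π)
    (hv : v ∈ X) : π v ∈ Y :=
  h.target_mem_right hv (hπ v)

theorem apply_mem_right_iff (h : BalancedBipartite A X Y a)
    (hπ : IsCycleFactor A π) : π v ∈ Y ↔ v ∈ X :=
  ⟨fun hv => by_contra fun hv' => h.mem_right_iff.1 hv (h.symm.apply_mem_right hπ
    (h.mem_right_iff.2 hv')), h.apply_mem_right hπ⟩

theorem apply_ne (h : BalancedBipartite A X Y a) (hπ : IsCycleFactor A π) (v : V) : π v ≠ v :=
  fun hv => h.irrefl v (by simpa [hv] using hπ v)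

theorem card_inter_left_le [DecidableEq V] {S : Finset V} (h : BalancedBipartite A X Y a)
    (hπ : IsCycleFactor A π) (hS : ∀ w, π w ∈ S ↔ w ∈ S) : #(S ∩ X) ≤ #(S ∩ Y) :=
  card_le_card_of_injOn π (fun w hw => by
    rw [mem_coe, mem_inter] at hw ⊢
    exact ⟨(hS w).2 hw.1, h.apply_mem_right hπ hw.2⟩) π.injective.injOn

theorem card_inter_left_eq [DecidableEq V] {S : Finset V} (h : BalancedBipartite A X Y a)
    (hπ : IsCycleFactor A π) (hS : ∀ w, π w ∈ S ↔ w ∈ S) : #(S ∩ X) = #(S ∩ Y) :=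
  le_antisymm (h.card_inter_left_le hπ hS) (h.symm.card_inter_left_le hπ hS)

end BalancedBipartite

section Finite

variable [Fintype V]

noncomputable def outNbrs (A : V → V → Prop) (v : V) : Finset V := {w | A v w}

noncomputable def inNbrs (A : V → V → Prop) (v : V) : Finset V := {w | A w v}

@[simp] theorem mem_outNbrs {v w : V} : w ∈ outNbrs A v ↔ A v w := by simp [outNbrs]

@[simp] theorem mem_inNbrs {v w : V} : w ∈ inNbrs A v ↔ A w v := by simp [inNbrs]

theorem deg_eq_card_add_card (A : V → V → Prop) (v : V) :
    deg A v = #(outNbrs A v) + #(inNbrs A v) := by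
  simp only [deg, outdeg, indeg, Nat.card_eq_fintype_card, Fintype.card_subtype, outNbrs, inNbrs]

namespace BalancedBipartite

variable {u v w : V}

theorem outNbrs_subset (h : BalancedBipartite A X Y a) (hv : v ∈ X) : outNbrs A v ⊆ Y :=
  fun _ hw => h.target_mem_right hv (mem_outNbrs.1 hw)

theorem inNbrs_subset (h : BalancedBipartite A X Y a) (hv : v ∈ X) : inNbrs A v ⊆ Y :=
  fun _ hw => h.source_mem_right hv (mem_inNbrs.1 hw)

theorem deg_le (h : BalancedBipartite A X Y a) (hv : v ∈ X) : deg A v ≤ 2 * a := by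
  rw [deg_eq_card_add_card, two_mul, ← h.card_right]
  exact add_le_add (card_le_card (h.outNbrs_subset hv)) (card_le_card (h.inNbrs_subset hv))

theorem arcs_of_two_mul_le_deg (h : BalancedBipartite A X Y a) (hv : v ∈ X)
    (hdeg : 2 * a ≤ deg A v) (hw : w ∈ Y) : A v w ∧ A w v := by
  rw [deg_eq_card_add_card, two_mul, ← h.card_right] at hdeg
  have hout := card_le_card (h.outNbrs_subset hv)
  have hin := card_le_card (h.inNbrs_subset hv)
  exact ⟨mem_outNbrs.1 (eq_of_subset_of_card_le (h.outNbrs_subset hv) (by omega) ▸ hw),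
    mem_inNbrs.1 (eq_of_subset_of_card_le (h.inNbrs_subset hv) (by omega) ▸ hw)⟩

theorem lt_deg (h : BalancedBipartite A X Y a) (ha : 2 ≤ a) (hM : CondM A a) (hv : v ∈ X) :
    a < deg A v := by
  obtain ⟨u, hu, huv⟩ := exists_mem_ne (by rw [h.card_left]; omega : 1 < #X) v
  have := h.add_deg_of_condM hM hu hv huv
  have := h.deg_le hu
  omega

theorem arcs_of_add_deg_le (h : BalancedBipartite A X Y a) (hM : CondM A a) {x x' y y' : V}
    (hx : x ∈ X) (hx' : x' ∈ X) (hxx' : x ≠ x') (hy : y ∈ Y) (hy' : y' ∈ Y) (hyy' : y ≠ y')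
    (hsum : deg A x' + deg A y' ≤ 2 * a + 2) : ∀ w ∈ X, A y w ∧ A w y := by
  have := h.add_deg_of_condM hM hx hx' hxx'
  have := h.deg_le hx
  have := h.symm.add_deg_of_condM hM hy hy' hyy'
  exact fun w hw => h.symm.arcs_of_two_mul_le_deg hy (by omega) hw

end BalancedBipartite

variable [DecidableEq V]

theorem isCycle_toList {π : Perm V} (hπ : IsCycleFactor A π) {x : V}
    (hx : π x ≠ x) : IsCycle A (π.toList x) := by
  refine ⟨two_le_length_toList_iff_mem_support.2 (mem_support.2 hx), nodup_toList π x, x, ?_, ?_⟩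
  · rw [List.head?_eq_getElem?, List.getElem?_eq_getElem (length_toList_pos_of_mem_support _ _
      (mem_support.2 hx)), toList_getElem_zero _ _ (mem_support.2 hx)]
  · rw [toList_append_singleton]
    exact List.isChain_iterate hπ _ _

theorem NoMergeAcross.compl {π : Perm V} {S : Finset V} (h : NoMergeAcross A π S) :
    NoMergeAcross A π Sᶜ :=
  fun u hu u' hu' huu' => h u' (by simpa using hu') u (by simpa using hu) huu'.symm

namespace BalancedBipartite

variable {π : Perm V} {S : Finset V} {u v : V}

theorem univ_eq_union (h : BalancedBipartite A X Y a) : univ = X ∪ Y :=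
  (eq_univ_of_forall fun v => mem_union.2 (h.mem_or_mem v)).symm

theorem card_eq (h : BalancedBipartite A X Y a) : Fintype.card V = 2 * a := by
  rw [← card_univ, h.univ_eq_union, card_union_of_disjoint h.disjoint, h.card_left,
    h.card_right, two_mul]

theorem card_le_card_biUnion_outNbrs (h : BalancedBipartite A X Y a) (ha : 2 ≤ a)
    (hM : CondM A a) {S : Finset V} (hS : S ⊆ X) : #S ≤ #(S.biUnion (outNbrs A)) := by
  set N := S.biUnion (outNbrs A)
  by_contra! hlt
  have hNY : N ⊆ Y := biUnion_subset.2 fun x hx => h.outNbrs_subset (hS hx)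
  have hdegS : ∀ x ∈ S, deg A x ≤ #N + a := fun x hx => by
    rw [deg_eq_card_add_card, ← h.card_right]
    exact add_le_add (card_le_card (subset_biUnion_of_mem _ hx))
      (card_le_card (h.inNbrs_subset (hS hx)))
  have hdegT : ∀ y ∈ Y \ N, deg A y + #S ≤ 2 * a := fun y hy => by
    rw [mem_sdiff] at hy
    have hin : inNbrs A y ⊆ X \ S := fun w hw => mem_sdiff.2
      ⟨h.symm.inNbrs_subset hy.1 hw, fun hwS => hy.2 (mem_biUnion.2 ⟨w, hwS, by simpa using hw⟩)⟩
    have hin' : #(inNbrs A y) ≤ a - #S := by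
      simpa [card_sdiff_of_subset hS, h.card_left] using card_le_card hin
    have hout : #(outNbrs A y) ≤ a := h.card_left ▸ card_le_card (h.symm.outNbrs_subset hy.1)
    have hSa : #S ≤ a := h.card_left ▸ card_le_card hS
    rw [deg_eq_card_add_card]
    omega
  have hT : #(Y \ N) = a - #N := by rw [card_sdiff_of_subset hNY, h.card_right]
  have hSa : #S ≤ a := h.card_left ▸ card_le_card hS
  have hN : 1 ≤ #N := by
    obtain ⟨x, hx⟩ : S.Nonempty := card_pos.1 (by omega)
    linarith [hdegS x hx, h.lt_deg ha hM (hS hx)]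
  have hSlt : #S < a := by
    obtain ⟨y, hy⟩ : (Y \ N).Nonempty := card_pos.1 (by omega)
    linarith [hdegT y hy, h.symm.lt_deg ha hM (mem_sdiff.1 hy).1]
  have hpairS : 3 * a + 1 ≤ 2 * (#N + a) := by
    obtain ⟨x₁, hx₁, x₂, hx₂, hx₁₂⟩ := one_lt_card.1 (show 1 < #S by omega)
    linarith [h.add_deg_of_condM hM (hS hx₁) (hS hx₂) hx₁₂, hdegS x₁ hx₁, hdegS x₂ hx₂]
  have hpairT : 3 * a + 1 + 2 * #S ≤ 4 * a := by
    obtain ⟨y₁, hy₁, y₂, hy₂, hy₁₂⟩ := one_lt_card.1 (show 1 < #(Y \ N) by omega)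
    linarith [h.symm.add_deg_of_condM hM (mem_sdiff.1 hy₁).1 (mem_sdiff.1 hy₂).1 hy₁₂,
      hdegT y₁ hy₁, hdegT y₂ hy₂]
  omega

theorem exists_injOn_arc (h : BalancedBipartite A X Y a) (ha : 2 ≤ a) (hM : CondM A a) :
    ∃ f : V → V, Set.InjOn f X ∧ ∀ x ∈ X, A x (f x) := by
  obtain ⟨f, hf, hfA⟩ := (all_card_le_biUnion_card_iff_exists_injective
    fun x : X => outNbrs A x).1 fun s => by
      have := h.card_le_card_biUnion_outNbrs ha hM (S := s.image Subtype.val)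
        fun x hx => by obtain ⟨y, -, rfl⟩ := mem_image.1 hx; exact y.2
      rwa [image_biUnion, card_image_of_injective _ Subtype.val_injective] at this
  refine ⟨fun v => if hv : v ∈ X then f ⟨v, hv⟩ else v, fun u hu v hv huv => ?_, fun x hx => ?_⟩
  · simp only [dif_pos (mem_coe.1 hu), dif_pos (mem_coe.1 hv)] at huv
    exact congrArg Subtype.val (hf huv)
  · simpa [dif_pos hx] using hfA ⟨x, hx⟩

theorem exists_isCycleFactor (h : BalancedBipartite A X Y a) (ha : 2 ≤ a) (hM : CondM A a) :
    ∃ π : Perm V, IsCycleFactor A π := by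
  obtain ⟨f, hf, hfA⟩ := h.exists_injOn_arc ha hM
  obtain ⟨g, hg, hgA⟩ := h.symm.exists_injOn_arc ha hM
  have hXc : (X : Set V)ᶜ = Y := by ext v; simp [h.mem_right_iff]
  have hinj : Function.Injective ((X : Set V).piecewise f g) := by
    refine (Set.injective_piecewise_iff _).2 ⟨hf, hXc ▸ hg, fun x hx y hy hxy => ?_⟩
    have hy' : y ∈ Y := h.mem_right_iff.2 hy
    exact h.mem_right_iff.1 (h.target_mem_right hx (hxy ▸ hfA x hx))
      (h.symm.target_mem_right hy' (hgA y hy'))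
  refine ⟨Equiv.ofBijective _ hinj.bijective_of_finite, fun v => ?_⟩
  by_cases hv : v ∈ X
  · simpa [hv] using hfA v hv
  · simpa [hv] using hgA v (h.mem_right_iff.2 hv)

theorem sum_inter_add_sum_inter (h : BalancedBipartite A X Y a) (S : Finset V) (f : V → ℕ) :
    ∑ v ∈ S ∩ X, f v + ∑ v ∈ S ∩ Y, f v = ∑ v ∈ S, f v := by
  rw [← sum_union (h.disjoint.mono inter_subset_right inter_subset_right),
    ← inter_union_distrib_left, ← h.univ_eq_union, inter_univ]

theorem card_inter_add_card_inter (h : BalancedBipartite A X Y a) (S : Finset V) :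
    #(S ∩ X) + #(S ∩ Y) = #S := by
  simpa using h.sum_inter_add_sum_inter S fun _ => 1

theorem card_inter_add_card_compl_inter (h : BalancedBipartite A X Y a) (S : Finset V) :
    #(S ∩ X) + #(Sᶜ ∩ X) = a := by
  rw [← card_union_of_disjoint (disjoint_compl_right.mono inter_subset_left inter_subset_left),
    ← union_inter_distrib_right, union_compl, univ_inter, h.card_left]

theorem card_nbrs_inter_le (h : BalancedBipartite A X Y a) (hv : v ∈ X) :
    #(outNbrs A v ∩ S) + #(inNbrs A v ∩ S) ≤ 2 * #(S ∩ Y) := by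
  rw [two_mul]
  exact add_le_add
    (card_le_card ((inter_subset_inter (h.outNbrs_subset hv) subset_rfl).trans_eq (inter_comm Y S)))
    (card_le_card ((inter_subset_inter (h.inNbrs_subset hv) subset_rfl).trans_eq (inter_comm Y S)))

theorem card_cross_le (h : BalancedBipartite A X Y a) (hπ : IsCycleFactor A π)
    (hS : ∀ w, π w ∈ S ↔ w ∈ S) (hNM : NoMergeAcross A π S) (hu : u ∈ S) (huX : u ∈ X) :
    #(outNbrs A u \ S) + #(inNbrs A (π u) \ S) ≤ #(Sᶜ ∩ X) := by
  -- an arc `u → w` leaving `S` is recorded by `π⁻¹ w`, an arc `u' → π u` entering `S` by `u'`;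
  -- both records lie in `T`, and `hNM` says that no vertex is recorded twice
  set T := Sᶜ ∩ X
  have hout : #(outNbrs A u \ S) = #{u' ∈ T | A u (π u')} := by
    refine card_nbij' π.symm π (fun w hw => ?_) (fun u' hu' => ?_) (fun w _ => by simp)
      (fun u' _ => by simp)
    · rw [mem_coe, mem_sdiff, mem_outNbrs] at hw
      have hwY := h.target_mem_right huX hw.1
      rw [← apply_symm_apply π w, h.apply_mem_right_iff hπ] at hwY
      have hwS : π.symm w ∉ S := by rw [← hS, apply_symm_apply]; exact hw.2
      simpa [T, hwY, hwS] using hw.1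
    · rw [mem_coe, mem_filter, mem_inter, mem_compl] at hu'
      simpa [hS] using ⟨hu'.2, hu'.1.1⟩
  have hin : inNbrs A (π u) \ S = {u' ∈ T | A u' (π u)} := by
    ext w
    simp only [mem_sdiff, mem_inNbrs, mem_filter, T, mem_inter, mem_compl]
    exact ⟨fun hw => ⟨⟨hw.2, h.symm.source_mem_right (h.apply_mem_right hπ huX) hw.1⟩, hw.1⟩,
      fun hw => ⟨hw.2, hw.1.1⟩⟩
  have hmerge : {u' ∈ T | A u' (π u)} ⊆ {u' ∈ T | ¬ A u (π u')} := fun u' hu' => by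
    rw [mem_filter, mem_inter, mem_compl] at hu' ⊢
    exact ⟨hu'.1, fun h' => hNM u hu u' hu'.1.1 ⟨h', hu'.2⟩⟩
  rw [hout, hin]
  calc #{u' ∈ T | A u (π u')} + #{u' ∈ T | A u' (π u)}
      ≤ #{u' ∈ T | A u (π u')} + #{u' ∈ T | ¬ A u (π u')} :=
        add_le_add le_rfl (card_le_card hmerge)
    _ = #T := card_filter_add_card_filter_not _

theorem sum_deg_le (h : BalancedBipartite A X Y a) (hπ : IsCycleFactor A π)
    (hS : ∀ w, π w ∈ S ↔ w ∈ S) (hNM : NoMergeAcross A π S) :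
    ∑ v ∈ S, deg A v ≤ 2 * #(S ∩ X) * (a + #(S ∩ X)) := by
  set m := #(S ∩ X)
  have hSc : ∀ w, π w ∈ Sᶜ ↔ w ∈ Sᶜ := fun w => by simpa using (hS w).not
  have hbal : m = #(S ∩ Y) := h.card_inter_left_eq hπ hS
  have hcard : #S = 2 * m := by rw [← h.card_inter_add_card_inter S, ← hbal, two_mul]
  have hma : m + #(Sᶜ ∩ X) = a := h.card_inter_add_card_compl_inter S
  have hinner : ∀ v, #(outNbrs A v ∩ S) + #(inNbrs A v ∩ S) ≤ 2 * m := fun v =>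
    (h.mem_or_mem v).elim (fun hv => hbal ▸ h.card_nbrs_inter_le hv) h.symm.card_nbrs_inter_le
  have hcross : ∀ u ∈ S, #(outNbrs A u \ S) + #(inNbrs A (π u) \ S) ≤ #(Sᶜ ∩ X) :=
    fun u hu => (h.mem_or_mem u).elim (h.card_cross_le hπ hS hNM hu) fun huY =>
      (h.symm.card_cross_le hπ hS hNM hu huY).trans_eq (h.card_inter_left_eq hπ hSc).symm
  have hreindex : ∑ v ∈ S, #(inNbrs A v \ S) = ∑ u ∈ S, #(inNbrs A (π u) \ S) :=
    sum_nbij' π.symm π (fun v hv => by rwa [← hS, apply_symm_apply]) (fun u hu => (hS u).2 hu)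
      (fun v _ => by simp) (fun u _ => by simp) (fun v _ => by simp)
  calc ∑ v ∈ S, deg A v
      = ∑ v ∈ S, (#(outNbrs A v ∩ S) + #(inNbrs A v ∩ S))
        + ∑ u ∈ S, (#(outNbrs A u \ S) + #(inNbrs A (π u) \ S)) := by
        rw [sum_add_distrib (f := fun u => #(outNbrs A u \ S)), ← hreindex, ← sum_add_distrib,
          ← sum_add_distrib]
        refine sum_congr rfl fun v _ => ?_
        rw [deg_eq_card_add_card, ← card_inter_add_card_sdiff (outNbrs A v) S,
          ← card_inter_add_card_sdiff (inNbrs A v) S]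
        ring
    _ ≤ ∑ v ∈ S, 2 * m + ∑ u ∈ S, #(Sᶜ ∩ X) :=
        add_le_add (sum_le_sum fun v _ => hinner v) (sum_le_sum hcross)
    _ = 2 * m * (a + m) := by
        rw [sum_const, sum_const, hcard, ← hma, smul_eq_mul, smul_eq_mul]
        ring

theorem lt_two_mul_card_inter (h : BalancedBipartite A X Y a) (hM : CondM A a)
    (hπ : IsCycleFactor A π) (hS : ∀ w, π w ∈ S ↔ w ∈ S) (hNM : NoMergeAcross A π S)
    (hm : 2 ≤ #(S ∩ X)) : a < 2 * #(S ∩ X) := by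
  have hbal := h.card_inter_left_eq hπ hS
  have hX : #(S ∩ X) * (3 * a + 1) ≤ 2 * ∑ v ∈ S ∩ X, deg A v :=
    card_mul_le_two_mul_sum hm fun u hu v hv huv =>
      h.add_deg_of_condM hM (mem_inter.1 hu).2 (mem_inter.1 hv).2 huv
  have hY : #(S ∩ Y) * (3 * a + 1) ≤ 2 * ∑ v ∈ S ∩ Y, deg A v :=
    card_mul_le_two_mul_sum (hbal ▸ hm) fun u hu v hv huv =>
      h.symm.add_deg_of_condM hM (mem_inter.1 hu).2 (mem_inter.1 hv).2 huv
  have hsum := h.sum_deg_le hπ hS hNM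
  rw [← h.sum_inter_add_sum_inter] at hsum
  rw [← hbal] at hY
  nlinarith

theorem card_inter_ne_one (h : BalancedBipartite A X Y a) (ha : 2 ≤ a) (hM : CondM A a)
    (hπ : IsCycleFactor A π) (hS : ∀ w, π w ∈ S ↔ w ∈ S) (hNM : NoMergeAcross A π S) :
    #(S ∩ X) ≠ 1 := by
  intro hm
  obtain ⟨x', hx'⟩ := card_eq_one.1 hm
  obtain ⟨hx'S, hx'X⟩ := mem_inter.1 (hx' ▸ mem_singleton_self x')
  have hy' := h.apply_mem_right hπ hx'X
  have hSY : S ∩ Y = {π x'} := (eq_of_subset_of_card_le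
    (singleton_subset_iff.2 (mem_inter.2 ⟨(hS x').2 hx'S, hy'⟩))
    (by rw [← h.card_inter_left_eq hπ hS, hm, card_singleton])).symm
  have hsum : deg A x' + deg A (π x') ≤ 2 * a + 2 := by
    have := h.sum_deg_le hπ hS hNM
    rw [hm, ← h.sum_inter_add_sum_inter, hx', hSY, sum_singleton, sum_singleton] at this
    omega
  obtain ⟨x, hx, hxx'⟩ := exists_mem_ne (by rw [h.card_left]; omega : 1 < #X) x'
  have hxS : x ∉ S := fun hxS => hxx' (mem_singleton.1 (hx' ▸ mem_inter.2 ⟨hxS, hx⟩))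
  have hy := h.apply_mem_right hπ hx
  have hyy' : π x ≠ π x' := π.injective.ne hxx'
  exact hNM x' hx'S x hxS ⟨(h.arcs_of_add_deg_le hM hx hx'X hxx' hy hy' hyy' hsum x' hx'X).2,
    (h.symm.arcs_of_add_deg_le hM hy hy' hyy' hx hx'X hxx' (by omega) (π x') hy').1⟩

theorem eq_univ_of_noMergeAcross (h : BalancedBipartite A X Y a) (ha : 2 ≤ a) (hM : CondM A a)
    (hπ : IsCycleFactor A π) (hS : ∀ w, π w ∈ S ↔ w ∈ S) (hNM : NoMergeAcross A π S)
    (hne : (S ∩ X).Nonempty) : S = univ := by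
  have hSc : ∀ w, π w ∈ Sᶜ ↔ w ∈ Sᶜ := fun w => by simpa using (hS w).not
  have hbig : ∀ T : Finset V, (∀ w, π w ∈ T ↔ w ∈ T) → NoMergeAcross A π T →
      (T ∩ X).Nonempty → a < 2 * #(T ∩ X) := fun T hT hNMT hTne => by
    have := h.card_inter_ne_one ha hM hπ hT hNMT
    have := card_pos.2 hTne
    exact h.lt_two_mul_card_inter hM hπ hT hNMT (by omega)
  have hcompl : Sᶜ ∩ X = ∅ := by
    by_contra hc
    have := hbig S hS hNM hne
    have := hbig Sᶜ hSc hNM.compl (nonempty_iff_ne_empty.2 hc)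
    have := h.card_inter_add_card_compl_inter S
    omega
  have : #Sᶜ = 0 := by
    rw [← h.card_inter_add_card_inter Sᶜ, ← h.card_inter_left_eq hπ hSc, hcompl, card_empty]
  simpa using this

theorem support_cycleOf_eq_univ (h : BalancedBipartite A X Y a) (ha : 2 ≤ a) (hM : CondM A a)
    (hπ : IsCycleFactor A π) {x₀ : V} (hx₀ : x₀ ∈ X)
    (hmax : ∀ σ, IsCycleFactor A σ → #(σ.cycleOf x₀).support ≤ #(π.cycleOf x₀).support) :
    (π.cycleOf x₀).support = univ := by
  refine h.eq_univ_of_noMergeAcross ha hM hπ (fun w => ?_) (fun u hu u' hu' huu' => ?_)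
    ⟨x₀, mem_inter.2 ⟨?_, hx₀⟩⟩
  · simp only [mem_support_cycleOf_iff' (h.apply_ne hπ x₀), sameCycle_apply_right]
  · have hσ : IsCycleFactor A (π * swap u u') := fun v => by
      rcases eq_or_ne v u with rfl | hvu
      · simpa using huu'.1
      rcases eq_or_ne v u' with rfl | hvu'
      · simpa using huu'.2
      simpa [swap_apply_of_ne_of_ne hvu hvu'] using hπ v
    exact (hmax _ hσ).not_gt
      (card_lt_card (support_cycleOf_ssubset_mul_swap hu hu' (h.apply_ne hσ x₀)))
  · exact (mem_support_cycleOf_iff' (h.apply_ne hπ x₀)).2 (SameCycle.refl _ _)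

end BalancedBipartite

end Finite

/-- Main Theorem: a balanced bipartite digraph with colour classes of
cardinality `a ≥ 2` satisfying condition (M) contains a hamiltonian cycle
(an oriented cycle of length `2a`). -/
theorem stmt8 {V : Type} [Fintype V] [DecidableEq V] (A : V → V → Prop)
    (X Y : Finset V) (a : ℕ) (ha : 2 ≤ a)
    (hbb : BalancedBipartite A X Y a) (hM : CondM A a) :
    HasCycleOfLength A (2 * a) := by
  obtain ⟨π₀, hπ₀⟩ := hbb.exists_isCycleFactor ha hM
  obtain ⟨x₀, hx₀⟩ : X.Nonempty := card_pos.1 (by rw [hbb.card_left]; omega)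
  obtain ⟨π, hπ, hmax⟩ := exists_max_image {σ : Perm V | IsCycleFactor A σ}
    (fun σ => #(σ.cycleOf x₀).support) ⟨π₀, by simpa using hπ₀⟩
  rw [mem_filter_univ] at hπ
  refine ⟨π.toList x₀, isCycle_toList hπ (hbb.apply_ne hπ x₀), ?_⟩
  rw [Equiv.Perm.length_toList,
    hbb.support_cycleOf_eq_univ ha hM hπ hx₀ fun σ hσ => hmax σ (by simpa using hσ),
    card_univ, hbb.card_eq]

end BipDigraph
end

section
/- Let D be a balanced bipartite digraph with colour classes of cardinality a ≥ 2. If the minimum degree δ(D) ≥ (3a+1)/2, then D contains an oriented cycle of length 2a. -/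
namespace BipDigraph

variable {V : Type}

/-!
The arcs of `D` that lie on 2-cycles `u → v → u` form an undirected bipartite graph `G`. The out-
and in-neighbours of `v` lie in the class opposite to `v`, of size `a`, so at least
`d(v) - a ≥ (a + 1) / 2` of them are both: `G` has minimum degree above `a / 2`, and by the
Moon–Moser theorem it has a hamiltonian cycle, which is also a cycle of `D`.

Moon–Moser follows by closure. Add a missing edge `xy` (`x ∈ X`, `y ∈ Y`); if `G + xy` has a
hamiltonian cycle, then either `G` has one or deleting `xy` leaves a hamiltonian path
`x = f 0, …, f m = y` of `G`. As `d(x) + d(y) > a = |Y|`, some neighbour `f (j + 1)` of `x`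
follows a neighbour `f j` of `y` on the path, and `f 0, …, f j, f m, …, f (j + 1)` is a
hamiltonian cycle of `G`.
-/

open Finset SimpleGraph

section Enumerations

variable {R S : V → V → Prop} {n m : ℕ}

/-- Hamiltonian paths and cycles are encoded by the enumeration `f 0, f 1, …, f (n - 1)` of the
vertices along them; a cycle is closed by the arc `f (n - 1) → f 0`. -/
def IsHamPath (R : V → V → Prop) (f : Fin n ≃ V) : Prop :=
  ∀ j k : Fin n, (k : ℕ) = j + 1 → R (f j) (f k)

def IsHamCycle (R : V → V → Prop) (f : Fin n ≃ V) : Prop :=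
  IsHamPath R f ∧ ∀ j k : Fin n, (j : ℕ) + 1 = n → (k : ℕ) = 0 → R (f j) (f k)

theorem IsHamCycle.rel {f : Fin n ≃ V} (hf : IsHamCycle R f) (j k : Fin n)
    (hjk : (k : ℕ) = j + 1 ∨ (j : ℕ) + 1 = n ∧ (k : ℕ) = 0) : R (f j) (f k) :=
  hjk.elim (hf.1 j k) fun h => hf.2 j k h.1 h.2

theorem IsHamCycle.mono {f : Fin n ≃ V} (hf : IsHamCycle R f) (hRS : ∀ u v, R u v → S u v) :
    IsHamCycle S f :=
  ⟨fun j k h => hRS _ _ (hf.1 j k h), fun j k h h' => hRS _ _ (hf.2 j k h h')⟩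

theorem IsHamCycle.hasCycleOfLength {f : Fin n ≃ V} (hf : IsHamCycle R f) (hn : 2 ≤ n) :
    HasCycleOfLength R n := by
  have h0 : 0 < n := by omega
  refine ⟨List.ofFn f, ⟨by simpa, List.nodup_ofFn.2 f.injective, f ⟨0, h0⟩, ?_, ?_⟩, by simp⟩
  · rw [List.head?_eq_getElem?]; simp [h0]
  · rw [List.Chain', List.isChain_iff_getElem]
    intro i hi
    simp only [List.length_append, List.length_ofFn, List.length_singleton] at hi
    rw [List.getElem_append_left (by simp; omega), List.getElem_ofFn]
    rcases Nat.lt_or_ge (i + 1) n with hlt | hge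
    · rw [List.getElem_append_left (by simpa), List.getElem_ofFn]
      exact hf.rel _ _ (Or.inl rfl)
    · rw [List.getElem_append_right (by simp; omega)]
      simp only [List.length_ofFn, List.getElem_singleton]
      exact hf.rel _ _ (Or.inr ⟨by simp; omega, rfl⟩)

end Enumerations

section Rotation

variable {R S : V → V → Prop} {m : ℕ}

theorem IsHamCycle.isHamCycle_or_exists_isHamPath {f : Fin (m + 1) ≃ V} (hf : IsHamCycle R f)
    (hm : 2 ≤ m) {b c : V} (hRS : ∀ u v, R u v → S u v ∨ (u = b ∧ v = c) ∨ (u = c ∧ v = b)) :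
    IsHamCycle S f ∨ ∃ g : Fin (m + 1) ≃ V, IsHamPath S g ∧
      (g 0 = b ∧ g (Fin.last m) = c ∨ g 0 = c ∧ g (Fin.last m) = b) := by
  by_cases hS : ∀ j k : Fin (m + 1), (k : ℕ) = j + 1 ∨ (j : ℕ) = m ∧ (k : ℕ) = 0 →
      S (f j) (f k)
  · exact Or.inl ⟨fun j k h => hS j k (Or.inl h), fun j k h h' => hS j k (Or.inr ⟨by omega, h'⟩)⟩
  push Not at hS
  obtain ⟨j, k, hjk, hnS⟩ := hS
  have hbc := (hRS _ _ (hf.rel j k (by omega))).resolve_left hnS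
  have hbad : ∀ p q : Fin (m + 1), ¬ S (f p) (f q) → R (f p) (f q) →
      (p = j ∧ q = k) ∨ (p = k ∧ q = j) := by
    intro p q hpq hR
    rcases (hRS _ _ hR).resolve_left hpq with ⟨hp, hq⟩ | ⟨hp, hq⟩ <;>
      rcases hbc with ⟨hj, hk⟩ | ⟨hj, hk⟩ <;>
      simp only [← hj, ← hk, f.injective.eq_iff] at hp hq <;> simp [hp, hq]
  -- rotate the cycle so that it starts at `f k` and the offending arc `f j → f k` closes it
  right
  refine ⟨(Equiv.addRight k).trans f, fun p q hpq => ?_, ?_⟩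
  · simp only [Equiv.trans_apply, Equiv.coe_addRight]
    have hR := hf.rel (p + k) (q + k) (by simp only [Fin.val_add_eq_ite]; split_ifs <;> omega)
    by_contra hnS'
    rcases hbad _ _ hnS' hR with ⟨hp, hq⟩ | ⟨hp, hq⟩ <;>
      · rw [Fin.ext_iff, Fin.val_add_eq_ite] at hp hq
        split_ifs at hp hq <;> omega
  · have hlast : Fin.last m + k = j := by
      ext; rw [Fin.val_add_eq_ite, Fin.val_last]; split_ifs <;> omega
    simp only [Equiv.trans_apply, Equiv.coe_addRight, zero_add, hlast]
    rcases hbc with ⟨hj, hk⟩ | ⟨hj, hk⟩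
    · exact Or.inr ⟨hk, hj⟩
    · exact Or.inl ⟨hk, hj⟩

end Rotation

section RevFrom

def revFrom (m i : ℕ) : Equiv.Perm (Fin (m + 1)) :=
  Function.Involutive.toPerm (fun k => if h : (k : ℕ) < i then k else ⟨m + i - k, by omega⟩)
    (fun k => by
      by_cases h : (k : ℕ) < i
      · simp [h]
      · have h' : ¬ m + i - k < i := by omega
        ext; simp only [h, h', dite_false]; omega)

theorem val_revFrom (m i : ℕ) (k : Fin (m + 1)) :
    (revFrom m i k : ℕ) = if (k : ℕ) < i then (k : ℕ) else m + i - k := by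
  simp only [revFrom, Function.Involutive.toPerm, Equiv.coe_fn_mk]
  split_ifs <;> rfl

variable {R : V → V → Prop} {m : ℕ}

/-- The cycle `f 0, …, f j, f m, f (m - 1), …, f (j + 1)`. -/
theorem IsHamPath.isHamCycle_revFrom (hR : ∀ u v, R u v → R v u) {f : Fin (m + 1) ≃ V}
    (hf : IsHamPath R f) {i j : Fin (m + 1)} (hij : (i : ℕ) = j + 1) (hi : R (f 0) (f i))
    (hj : R (f (Fin.last m)) (f j)) : IsHamCycle R ((revFrom m i).trans f) := by
  have key : ∀ p q : Fin (m + 1), (q : ℕ) = p + 1 ∨ (p : ℕ) = q + 1 ∨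
      (p = j ∧ q = Fin.last m) ∨ (p = i ∧ q = 0) → R (f p) (f q) := by
    rintro p q (h | h | ⟨rfl, rfl⟩ | ⟨rfl, rfl⟩)
    · exact hf p q h
    · exact hR _ _ (hf q p h)
    · exact hR _ _ hj
    · exact hR _ _ hi
  refine ⟨fun p q hpq => key _ _ ?_, fun p q hp hq => key _ _ ?_⟩ <;>
    simp only [Fin.ext_iff, val_revFrom, Fin.val_last, Fin.val_zero] <;> split_ifs <;> omega

end RevFrom

section Ore

variable [Fintype V] {G : SimpleGraph V} [DecidableRel G.Adj] {s t : Finset V} {m : ℕ}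
  {f : Fin (m + 1) ≃ V}

/-- Pigeonhole on `t`: the neighbours of `f 0` and the path successors of the neighbours of
`f m` all lie in `t`. -/
theorem IsHamPath.exists_adj_adj (hf : IsHamPath G.Adj f) (hG : G.IsBipartiteWith ↑s ↑t)
    (h0 : f 0 ∈ s) (hlast : f (Fin.last m) ∈ t)
    (hdeg : #t < G.degree (f 0) + G.degree (f (Fin.last m))) :
    ∃ i j : Fin (m + 1), (i : ℕ) = j + 1 ∧ G.Adj (f 0) (f i) ∧ G.Adj (f (Fin.last m)) (f j) := by
  classical
  let next : V ≃ V := f.symm.trans ((Equiv.addRight 1).trans f)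
  have hnext : ∀ w, G.Adj (f (Fin.last m)) w →
      ((f.symm (next w) : Fin (m + 1)) : ℕ) = f.symm w + 1 ∧ G.Adj w (next w) := by
    intro w hw
    have hne : f.symm w ≠ Fin.last m := fun h => hw.ne (by rw [← h, Equiv.apply_symm_apply])
    have hval : ((f.symm w + 1 : Fin (m + 1)) : ℕ) = f.symm w + 1 := by
      rw [Fin.val_add_one, if_neg hne]
    refine ⟨by simpa [next] using hval, ?_⟩
    simpa [next] using hf _ _ hval
  have hsub : (G.neighborFinset (f (Fin.last m))).map next.toEmbedding ⊆ t := by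
    intro v hv
    obtain ⟨w, hw, rfl⟩ := mem_map.1 hv
    rw [mem_neighborFinset] at hw
    exact hG.mem_of_mem_adj (hG.mem_of_mem_adj' hlast hw.symm) (hnext w hw).2
  obtain ⟨v, hv⟩ := inter_nonempty_of_card_lt_card_add_card
    (isBipartiteWith_neighborFinset_subset hG h0) hsub (by simpa using hdeg)
  obtain ⟨hxv, hv⟩ := mem_inter.1 hv
  obtain ⟨w, hw, rfl⟩ := mem_map.1 hv
  rw [mem_neighborFinset] at hxv hw
  exact ⟨f.symm (next w), f.symm w, (hnext w hw).1, by simpa using hxv, by simpa using hw⟩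

theorem IsHamPath.exists_isHamCycle (hf : IsHamPath G.Adj f) (hG : G.IsBipartiteWith ↑s ↑t)
    (h0 : f 0 ∈ s) (hlast : f (Fin.last m) ∈ t)
    (hdeg : #t < G.degree (f 0) + G.degree (f (Fin.last m))) :
    ∃ g : Fin (m + 1) ≃ V, IsHamCycle G.Adj g := by
  obtain ⟨i, j, hij, hi, hj⟩ := hf.exists_adj_adj hG h0 hlast hdeg
  exact ⟨_, hf.isHamCycle_revFrom (fun _ _ h => h.symm) hij hi hj⟩

end Ore

theorem exists_isHamCycle_of_forall_rel [Fintype V] {R : V → V → Prop} {s t : Finset V} {a : ℕ}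
    (hst : Disjoint s t) (hcov : ∀ v, v ∈ s ∨ v ∈ t) (hs : #s = a) (ht : #t = a)
    (hR : ∀ x ∈ s, ∀ y ∈ t, R x y ∧ R y x) : ∃ f : Fin (2 * a) ≃ V, IsHamCycle R f := by
  classical
  let es := (s.equivFinOfCardEq hs).symm
  let et := (t.equivFinOfCardEq ht).symm
  let f : Fin (2 * a) → V := fun k =>
    if (k : ℕ) % 2 = 0 then es ⟨k / 2, by omega⟩ else et ⟨k / 2, by omega⟩
  have hf : ∀ k : Fin (2 * a), ((k : ℕ) % 2 = 0 → f k ∈ s) ∧ ((k : ℕ) % 2 = 1 → f k ∈ t) := by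
    intro k
    refine ⟨fun h => ?_, fun h => ?_⟩ <;> simp only [f, h] <;> simp
  have hinj : f.Injective := by
    intro k l hkl
    have hpar : (k : ℕ) % 2 = l % 2 := by
      by_contra hne
      rcases Nat.mod_two_eq_zero_or_one k with h | h
      · exact disjoint_left.1 hst ((hf k).1 h) (hkl ▸ (hf l).2 (by omega))
      · exact disjoint_left.1 hst (hkl ▸ (hf l).1 (by omega)) ((hf k).2 h)
    have hdiv : (k : ℕ) / 2 = l / 2 := by
      simp only [f, hpar] at hkl
      split_ifs at hkl
      · simpa using es.injective (Subtype.ext hkl)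
      · simpa using et.injective (Subtype.ext hkl)
    omega
  have hcard : Fintype.card (Fin (2 * a)) = Fintype.card V := by
    have huniv : (univ : Finset V) = s ∪ t := by
      ext v; simpa using hcov v
    rw [Fintype.card_fin, ← card_univ, huniv, card_union_of_disjoint hst]
    omega
  refine ⟨Equiv.ofBijective f ((Fintype.bijective_iff_injective_and_card f).2 ⟨hinj, hcard⟩),
    fun j k hjk => ?_, fun j k hj hk => ?_⟩ <;> simp only [Equiv.ofBijective_apply]
  · rcases Nat.mod_two_eq_zero_or_one j with h | h
    · exact (hR _ ((hf j).1 h) _ ((hf k).2 (by omega))).1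
    · exact (hR _ ((hf k).1 (by omega)) _ ((hf j).2 h)).2
  · exact (hR _ ((hf k).1 (by omega)) _ ((hf j).2 (by omega))).2

section MoonMoser

theorem isBipartiteWith_sup_edge {G : SimpleGraph V} {s t : Finset V}
    (hG : G.IsBipartiteWith ↑s ↑t) {x y : V} (hx : x ∈ s) (hy : y ∈ t) :
    (G ⊔ edge x y).IsBipartiteWith ↑s ↑t := by
  refine ⟨hG.disjoint, fun u v h => h.elim (fun h => hG.mem_of_adj h) fun h => ?_⟩
  rcases ((edge_adj _ _ _ _).1 h).1 with ⟨rfl, rfl⟩ | ⟨rfl, rfl⟩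
  · exact Or.inl ⟨hx, hy⟩
  · exact Or.inr ⟨hy, hx⟩

variable [Fintype V] {s t : Finset V} {a : ℕ}

theorem exists_isHamCycle_of_sup_edge {G : SimpleGraph V} [DecidableRel G.Adj]
    (hG : G.IsBipartiteWith ↑s ↑t) (hs : #s = a) (ht : #t = a) {x y : V} (hx : x ∈ s)
    (hy : y ∈ t) (hxy : a < G.degree x + G.degree y) {n : ℕ} (hn : 3 ≤ n) {f : Fin n ≃ V}
    (hf : IsHamCycle (G ⊔ edge x y).Adj f) : ∃ g : Fin n ≃ V, IsHamCycle G.Adj g := by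
  obtain ⟨m, rfl⟩ : ∃ m, n = m + 1 := ⟨n - 1, by omega⟩
  have hRS : ∀ u v, (G ⊔ edge x y).Adj u v → G.Adj u v ∨ (u = x ∧ v = y) ∨ (u = y ∧ v = x) :=
    fun u v h => h.imp_right fun h' => ((edge_adj _ _ _ _).1 h').1
  rcases hf.isHamCycle_or_exists_isHamPath (by omega) hRS with hG' | ⟨g, hg, ⟨h0, hl⟩ | ⟨h0, hl⟩⟩
  · exact ⟨f, hG'⟩
  · exact hg.exists_isHamCycle hG (h0 ▸ hx) (hl ▸ hy) (by rw [h0, hl, ht]; exact hxy)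
  · exact hg.exists_isHamCycle hG.symm (h0 ▸ hy) (hl ▸ hx) (by rw [h0, hl, hs]; omega)

theorem exists_isHamCycle_of_isBipartiteWith (G : SimpleGraph V) [DecidableRel G.Adj]
    (hG : G.IsBipartiteWith ↑s ↑t) (hcov : ∀ v, v ∈ s ∨ v ∈ t) (hs : #s = a) (ht : #t = a)
    (ha : 2 ≤ a) (hore : ∀ x ∈ s, ∀ y ∈ t, ¬ G.Adj x y → a < G.degree x + G.degree y) :
    ∃ f : Fin (2 * a) ≃ V, IsHamCycle G.Adj f := by
  induction G using WellFoundedGT.induction generalizing ‹DecidableRel G.Adj› with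
  | _ G ih =>
  by_cases hcomplete : ∀ x ∈ s, ∀ y ∈ t, G.Adj x y
  · exact exists_isHamCycle_of_forall_rel (disjoint_coe.1 hG.disjoint) hcov hs ht
      fun x hx y hy => ⟨hcomplete x hx y hy, (hcomplete x hx y hy).symm⟩
  push Not at hcomplete
  obtain ⟨x, hx, y, hy, hxy⟩ := hcomplete
  classical
  have hne : x ≠ y := fun h => disjoint_left.1 (disjoint_coe.1 hG.disjoint) hx (h ▸ hy)
  have hlt : G < G ⊔ edge x y := lt_of_le_of_ne le_sup_left fun h =>
    hxy (h ▸ Or.inr ((edge_adj _ _ _ _).2 ⟨Or.inl ⟨rfl, rfl⟩, hne⟩))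
  obtain ⟨f, hf⟩ := ih _ hlt (isBipartiteWith_sup_edge hG hx hy) fun x' hx' y' hy' h =>
    (hore x' hx' y' hy' fun h' => h (Or.inl h')).trans_le
      (add_le_add (degree_le_of_le le_sup_left) (degree_le_of_le le_sup_left))
  exact exists_isHamCycle_of_sup_edge hG hs ht hx hy (hore x hx y hy hxy) (by omega) hf

end MoonMoser

section Digraph

variable {A : V → V → Prop} {X Y : Finset V} {a : ℕ}

def mutualGraph (A : V → V → Prop) : SimpleGraph V :=
  SimpleGraph.fromRel fun u v => A u v ∧ A v u

theorem rel_of_mutualGraph_adj {u v : V} (h : (mutualGraph A).Adj u v) : A u v :=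
  h.2.elim And.left And.right

theorem isBipartiteWith_mutualGraph (hbb : BalancedBipartite A X Y a) :
    (mutualGraph A).IsBipartiteWith ↑X ↑Y :=
  ⟨disjoint_coe.2 hbb.2.2.1, fun u v h => hbb.2.2.2.2 u v (rel_of_mutualGraph_adj h)⟩

theorem BalancedBipartite.exists_opposite_s9 (hbb : BalancedBipartite A X Y a) (v : V) :
    ∃ C : Finset V, #C = a ∧ v ∉ C ∧ ∀ w, A v w ∨ A w v → w ∈ C := by
  obtain ⟨hX, hY, hXY, hcov, hA⟩ := hbb
  rcases hcov v with hv | hv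
  · refine ⟨Y, hY, disjoint_left.1 hXY hv, fun w h => ?_⟩
    rcases h with h | h <;> rcases hA _ _ h with ⟨h1, h2⟩ | ⟨h1, h2⟩
    all_goals first | assumption | exact absurd hv (disjoint_right.1 hXY ‹_›)
  · refine ⟨X, hX, disjoint_right.1 hXY hv, fun w h => ?_⟩
    rcases h with h | h <;> rcases hA _ _ h with ⟨h1, h2⟩ | ⟨h1, h2⟩
    all_goals first | assumption | exact absurd hv (disjoint_left.1 hXY ‹_›)

theorem deg_le_add_degree_mutualGraph [Fintype V] [DecidableRel (mutualGraph A).Adj]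
    (hbb : BalancedBipartite A X Y a) (v : V) : deg A v ≤ a + (mutualGraph A).degree v := by
  classical
  obtain ⟨C, hC, hvC, hopp⟩ := hbb.exists_opposite_s9 v
  set out := univ.filter (A v)
  set inn := univ.filter (A · v)
  have hdeg : deg A v = #out + #inn := by
    simp only [deg, outdeg, indeg, Nat.card_eq_fintype_card, Fintype.card_subtype, out, inn]
  have hmutual : (mutualGraph A).neighborFinset v = out ∩ inn := by
    ext w
    rw [mem_neighborFinset]
    simp only [mutualGraph, fromRel_adj, mem_inter, mem_filter, mem_univ, true_and, out, inn]
    refine ⟨fun ⟨_, h⟩ => h.elim id And.symm, fun h => ⟨?_, Or.inl h⟩⟩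
    rintro rfl
    exact hvC (hopp v (Or.inl h.1))
  have hsub : out ∪ inn ⊆ C := fun w hw => hopp w (by simpa [out, inn] using hw)
  have := card_union_add_card_inter out inn
  have := card_le_card hsub
  rw [← card_neighborFinset_eq_degree, hmutual]
  omega

end Digraph

theorem stmt9_general {V : Type} [Fintype V] (A : V → V → Prop)
    (X Y : Finset V) (a : ℕ) (ha : 2 ≤ a)
    (hbb : BalancedBipartite A X Y a)
    (hdeg : ∀ v : V, 3 * a + 1 ≤ 2 * deg A v) :
    HasCycleOfLength A (2 * a) := by
  classical
  have hG := isBipartiteWith_mutualGraph hbb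
  have hmutual : ∀ v, a + 1 ≤ 2 * (mutualGraph A).degree v := fun v => by
    have := deg_le_add_degree_mutualGraph hbb v
    have := hdeg v
    omega
  obtain ⟨hX, hY, -, hcov, -⟩ := hbb
  obtain ⟨f, hf⟩ := exists_isHamCycle_of_isBipartiteWith (mutualGraph A) hG hcov hX hY ha
    fun x _ y _ _ => by
      have := hmutual x
      have := hmutual y
      omega
  exact (hf.mono fun _ _ => rel_of_mutualGraph_adj).hasCycleOfLength (by omega)

/-- a balanced bipartite digraph on `2a` vertices (`a ≥ 2`) with minimal
degree `δ(D) ≥ (3a+1)/2` contains an oriented cycle of length `2a`. -/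
theorem stmt9 {V : Type} [Fintype V] [DecidableEq V] (A : V → V → Prop)
    (X Y : Finset V) (a : ℕ) (ha : 2 ≤ a)
    (hbb : BalancedBipartite A X Y a)
    (hdeg : ∀ v : V, 3 * a + 1 ≤ 2 * deg A v) :
    HasCycleOfLength A (2 * a) :=
  stmt9_general A X Y a ha hbb hdeg

end BipDigraph
end
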